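/- arXiv:2111.05425 — 4 statements merged into one kernel-verified Lean document; each statement's English description precedes it below -/
import Mathlib

section
/- If every edge of a geometric graph G intersects all other edges of G (that is, G has no pair of disjoint edges), then |E(G)| ≤ |V(G)|. -/
open scoped Classical

noncomputable section

abbrev Pt : Type := EuclideanSpace ℝ (Fin 2)

instance : Fact (Module.finrank ℝ Pt = 2) := ⟨finrank_euclideanSpace_fin⟩

noncomputable instance : Module.Oriented ℝ Pt (Fin 2) :=
  ⟨(EuclideanSpace.basisFun (Fin 2) ℝ).toBasis.orientation⟩

/-- A (combinatorial datum of a) geometric graph: a finite set of vertices (points of the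
plane) together with a finite set of edges (unordered pairs of points). -/
structure GeomGraph where
  verts : Finset Pt
  edges : Finset (Sym2 Pt)

/-- `G` is a geometric graph: edges are non-degenerate pairs of vertices, and the vertices
are in general position (no three collinear). -/
def GeomGraph.IsGeometric (G : GeomGraph) : Prop :=
  (∀ e ∈ G.edges, ¬ e.IsDiag ∧ ∀ p ∈ e, p ∈ G.verts) ∧
  ∀ p ∈ G.verts, ∀ q ∈ G.verts, ∀ r ∈ G.verts,
    p ≠ q → p ≠ r → q ≠ r → ¬ Collinear ℝ ({p, q, r} : Set Pt)

/-- The closed straight-line segment realizing an edge. -/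
def edgeSeg (e : Sym2 Pt) : Set Pt :=
  Sym2.lift ⟨fun u v => segment ℝ u v, fun u v => segment_symm ℝ u v⟩ e

/-- Two edges are disjoint if their closed segments do not intersect. -/
def EdgesDisjoint (e f : Sym2 Pt) : Prop := edgeSeg e ∩ edgeSeg f = ∅

/-- `DJedge G e` is the set of edges of `G` disjoint from `e`. -/
def DJedge (G : GeomGraph) (e : Sym2 Pt) : Finset (Sym2 Pt) :=
  G.edges.filter (fun f => EdgesDisjoint e f)

/-- `DJpairs G` is the set of unordered pairs of disjoint edges of `G`. -/
def DJpairs (G : GeomGraph) : Finset (Sym2 (Sym2 Pt)) :=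
  G.edges.sym2.filter (fun pr => ∃ e f, pr = s(e, f) ∧ EdgesDisjoint e f)

/-- The neighborhood of a vertex. -/
def nbhd (G : GeomGraph) (v : Pt) : Finset Pt :=
  G.verts.filter (fun w => s(v, w) ∈ G.edges)

/-- The degree of a vertex. -/
def deg (G : GeomGraph) (v : Pt) : ℕ := (nbhd G v).card

/-- A geometric graph is locally convex if every vertex lies outside the convex hull of
its neighborhood. -/
def GeomGraph.LocallyConvex (G : GeomGraph) : Prop :=
  ∀ v ∈ G.verts, v ∉ convexHull ℝ (nbhd G v : Set Pt)

/-- The oriented angle `∠ x y z ∈ (-π, π]`, measured counterclockwise from the ray `yx`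
to the ray `yz`. -/
def oangle (x y z : Pt) : ℝ := (EuclideanGeometry.oangle x y z).toReal


lemma edgeSeg_mk (a b : Pt) : edgeSeg s(a, b) = segment ℝ a b := rfl

lemma core_scalar {c e a b s1 s2 d1 d2 : ℝ} (hce : 0 < c * e) (ha : 0 < a) (hb : 0 < b)
    (hs1 : 0 ≤ s1) (hs2 : 0 ≤ s2)
    (e1 : a = c + s1 * d1) (e2 : (0:ℝ) = e + s1 * d2)
    (e3 : (0:ℝ) = c + s2 * d1) (e4 : b = e + s2 * d2) : False := by
  have hc : c ≠ 0 := by rintro rfl; simp at hce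
  have he : e ≠ 0 := by rintro rfl; simp at hce
  have hs1' : 0 < s1 := by
    rcases eq_or_lt_of_le hs1 with h' | h'
    · exfalso; apply he; rw [← h'] at e2; linarith
    · exact h'
  have hs2' : 0 < s2 := by
    rcases eq_or_lt_of_le hs2 with h' | h'
    · exfalso; apply hc; rw [← h'] at e3; linarith
    · exact h'
  have h1 : s2 * a = c * (s2 - s1) := by linear_combination s2 * e1 - s1 * e3
  have h2 : s1 * b = e * (s1 - s2) := by linear_combination s1 * e4 - s2 * e2
  have key : (s2 * a) * (s1 * b) = -(c * e) * (s2 - s1) ^ 2 := by rw [h1, h2]; ring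
  nlinarith [mul_pos (mul_pos hs2' ha) (mul_pos hs1' hb), sq_nonneg (s2 - s1)]

lemma collinear_triple {v a b : Pt} {r : ℝ} (hab : a - v = r • (b - v)) :
    Collinear ℝ ({v, a, b} : Set Pt) := by
  rw [collinear_iff_of_mem (Set.mem_insert v _)]
  refine ⟨b - v, fun p hp => ?_⟩
  simp only [Set.mem_insert_iff, Set.mem_singleton_iff] at hp
  rcases hp with rfl | rfl | rfl
  · exact ⟨0, by simp⟩
  · exact ⟨r, by rw [vadd_eq_add, ← hab]; abel⟩
  · exact ⟨1, by rw [vadd_eq_add, one_smul]; abel⟩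

lemma collinear_of_mem_segment {x y z : Pt} (hz : z ∈ segment ℝ x y) :
    Collinear ℝ ({x, z, y} : Set Pt) := by
  rw [segment_eq_image'] at hz
  obtain ⟨t, -, rfl⟩ := hz
  have : (x + t • (y - x)) - x = t • (y - x) := by abel
  exact collinear_triple this

lemma indep_of_not_collinear {v a b : Pt} (hcol : ¬ Collinear ℝ ({v, a, b} : Set Pt)) :
    ∀ s t : ℝ, s • (a - v) + t • (b - v) = 0 → s = 0 ∧ t = 0 := by
  intro s t hst
  by_contra hc
  rw [not_and_or] at hc
  apply hcol
  rcases hc with hs | ht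
  · refine collinear_triple (r := -t / s) ?_
    have h1 : a - v = s⁻¹ • (s • (a - v)) := by
      rw [smul_smul, inv_mul_cancel₀ hs, one_smul]
    have h2 : s • (a - v) = -(t • (b - v)) := eq_neg_of_add_eq_zero_left hst
    rw [h1, h2, smul_neg, smul_smul, ← neg_smul]
    congr 1
    field_simp
  · have hset : ({v, a, b} : Set Pt) = {v, b, a} := by rw [Set.pair_comm a b]
    rw [hset]
    refine collinear_triple (r := -s / t) ?_
    have h1 : b - v = t⁻¹ • (t • (b - v)) := by
      rw [smul_smul, inv_mul_cancel₀ ht, one_smul]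
    have h2 : t • (b - v) = -(s • (a - v)) := eq_neg_of_add_eq_zero_right hst
    rw [h1, h2, smul_neg, smul_smul, ← neg_smul]
    congr 1
    field_simp

lemma coords_unique {R1 R2 : Pt}
    (hind : ∀ s t : ℝ, s • R1 + t • R2 = 0 → s = 0 ∧ t = 0)
    {s t s' t' : ℝ} (h : s • R1 + t • R2 = s' • R1 + t' • R2) : s = s' ∧ t = t' := by
  have h1 : (s - s') • R1 + (t - t') • R2 = (s • R1 + t • R2) - (s' • R1 + t' • R2) := by
    module
  have h0 : (s - s') • R1 + (t - t') • R2 = 0 := by rw [h1, h, sub_self]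
  obtain ⟨hs, ht⟩ := hind _ _ h0
  exact ⟨sub_eq_zero.mp hs, sub_eq_zero.mp ht⟩

lemma no_other_edge (G : GeomGraph) (hG : G.IsGeometric)
    (h : ∀ e ∈ G.edges, ∀ f ∈ G.edges, ¬ EdgesDisjoint e f)
    (v u1 u2 u : Pt) (hv : v ∈ G.verts)
    (he1 : s(v, u1) ∈ G.edges) (he2 : s(v, u2) ∈ G.edges)
    (hind : ∀ s t : ℝ, s • (u1 - v) + t • (u2 - v) = 0 → s = 0 ∧ t = 0)
    (c e : ℝ) (hce : 0 < c * e)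
    (hU : u - v = c • (u1 - v) + e • (u2 - v)) :
    ∀ w, s(u, w) ∈ G.edges → w = v := by
  intro w hw
  by_contra hwv
  have huv : u ≠ v := by
    intro h'
    have h0 : c • (u1 - v) + e • (u2 - v) = 0 := by rw [← hU, h', sub_self]
    obtain ⟨hc0, -⟩ := hind _ _ h0
    rw [hc0] at hce; simp at hce
  have huw : u ≠ w := by
    intro h'
    exact (hG.1 _ hw).1 (by rw [Sym2.mk_isDiag_iff, h'])
  have hwverts : w ∈ G.verts := (hG.1 _ hw).2 w (Sym2.mem_mk_right _ _)
  have huverts : u ∈ G.verts := (hG.1 _ hw).2 u (Sym2.mem_mk_left _ _)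
  have hncol : ¬ Collinear ℝ ({u, v, w} : Set Pt) :=
    hG.2 u huverts v hv w hwverts huv huw (fun h' => hwv h'.symm)
  -- intersections with the two edges at v
  have hi1 : (edgeSeg s(u,w) ∩ edgeSeg s(v,u1)).Nonempty := by
    rw [Set.nonempty_iff_ne_empty]; exact h _ hw _ he1
  have hi2 : (edgeSeg s(u,w) ∩ edgeSeg s(v,u2)).Nonempty := by
    rw [Set.nonempty_iff_ne_empty]; exact h _ hw _ he2
  obtain ⟨p1, hp1uw, hp1⟩ := hi1
  obtain ⟨p2, hp2uw, hp2⟩ := hi2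
  rw [edgeSeg_mk] at hp1uw hp1 hp2uw hp2
  have hp1v : p1 ≠ v := by rintro rfl; exact hncol (collinear_of_mem_segment hp1uw)
  have hp2v : p2 ≠ v := by rintro rfl; exact hncol (collinear_of_mem_segment hp2uw)
  rw [segment_eq_image'] at hp1uw hp1 hp2uw hp2
  obtain ⟨a1, ⟨ha10, -⟩, hp1e⟩ := hp1
  obtain ⟨s1, ⟨hs10, -⟩, hs1e⟩ := hp1uw
  obtain ⟨b1, ⟨hb10, -⟩, hp2e⟩ := hp2
  obtain ⟨s2, ⟨hs20, -⟩, hs2e⟩ := hp2uw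
  have ha1 : 0 < a1 := by
    rcases eq_or_lt_of_le ha10 with h' | h'
    · exfalso; apply hp1v; rw [← hp1e, ← h']; simp
    · exact h'
  have hb1 : 0 < b1 := by
    rcases eq_or_lt_of_le hb10 with h' | h'
    · exfalso; apply hp2v; rw [← hp2e, ← h']; simp
    · exact h'
  -- coordinates of (w - u) in the basis (u1 - v, u2 - v)
  have li : LinearIndependent ℝ ![u1 - v, u2 - v] := LinearIndependent.pair_iff.mpr hind
  have hcard : Fintype.card (Fin 2) = Module.finrank ℝ Pt := by
    simp [finrank_euclideanSpace_fin]
  set B := basisOfLinearIndependentOfCardEqFinrank li hcard with hB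
  have hcoe : ⇑B = ![u1 - v, u2 - v] := coe_basisOfLinearIndependentOfCardEqFinrank li hcard
  set d1 := B.repr (w - u) 0 with hd1
  set d2 := B.repr (w - u) 1 with hd2
  have hD : w - u = d1 • (u1 - v) + d2 • (u2 - v) := by
    have hsum := B.sum_repr (w - u)
    rw [Fin.sum_univ_two] at hsum
    rw [hd1, hd2, ← show B 0 = u1 - v from by rw [hcoe]; rfl,
      ← show B 1 = u2 - v from by rw [hcoe]; rfl]
    exact hsum.symm
  have hq1 : v + a1 • (u1 - v) = u + s1 • (w - u) := hp1e.trans hs1e.symm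
  have hq2 : v + b1 • (u2 - v) = u + s2 • (w - u) := hp2e.trans hs2e.symm
  have key1 : a1 • (u1 - v) + (0:ℝ) • (u2 - v)
      = (c + s1 * d1) • (u1 - v) + (e + s1 * d2) • (u2 - v) := by
    calc a1 • (u1 - v) + (0:ℝ) • (u2 - v)
        = (v + a1 • (u1 - v)) - v := by module
      _ = (u + s1 • (w - u)) - v := by rw [hq1]
      _ = (u - v) + s1 • (w - u) := by module
      _ = (c • (u1 - v) + e • (u2 - v)) + s1 • (d1 • (u1 - v) + d2 • (u2 - v)) := by
          rw [← hU, ← hD]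
      _ = (c + s1 * d1) • (u1 - v) + (e + s1 * d2) • (u2 - v) := by module
  have key2 : (0:ℝ) • (u1 - v) + b1 • (u2 - v)
      = (c + s2 * d1) • (u1 - v) + (e + s2 * d2) • (u2 - v) := by
    calc (0:ℝ) • (u1 - v) + b1 • (u2 - v)
        = (v + b1 • (u2 - v)) - v := by module
      _ = (u + s2 • (w - u)) - v := by rw [hq2]
      _ = (u - v) + s2 • (w - u) := by module
      _ = (c • (u1 - v) + e • (u2 - v)) + s2 • (d1 • (u1 - v) + d2 • (u2 - v)) := by
          rw [← hU, ← hD]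
      _ = (c + s2 * d1) • (u1 - v) + (e + s2 * d2) • (u2 - v) := by module
  obtain ⟨eq1, eq2⟩ := coords_unique hind key1
  obtain ⟨eq3, eq4⟩ := coords_unique hind key2
  exact core_scalar hce ha1 hb1 hs10 hs20 eq1 eq2 eq3 eq4

lemma deg_le_one_of_forall (G : GeomGraph) (u v : Pt)
    (key : ∀ w, s(u, w) ∈ G.edges → w = v) : deg G u ≤ 1 := by
  rw [deg]
  refine le_trans (Finset.card_le_card ?_) (Finset.card_singleton v).le
  intro w hw
  simp only [nbhd, Finset.mem_filter] at hw
  rw [Finset.mem_singleton]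
  exact key w hw.2

lemma exists_deg_le_one (G : GeomGraph) (hG : G.IsGeometric)
    (h : ∀ e ∈ G.edges, ∀ f ∈ G.edges, ¬ EdgesDisjoint e f)
    (v : Pt) (hv : v ∈ G.verts) (h3 : 3 ≤ deg G v) :
    ∃ u ∈ G.verts, deg G u ≤ 1 := by
  rw [deg] at h3
  have h2 : 2 < (nbhd G v).card := by omega
  obtain ⟨u1, u2, u3, hm1, hm2, hm3, h12, h13, h23⟩ := Finset.two_lt_card_iff.mp h2
  simp only [nbhd, Finset.mem_filter] at hm1 hm2 hm3
  obtain ⟨hu1V, he1⟩ := hm1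
  obtain ⟨hu2V, he2⟩ := hm2
  obtain ⟨hu3V, he3⟩ := hm3
  have hv1 : v ≠ u1 := fun h' => (hG.1 _ he1).1 (Sym2.mk_isDiag_iff.mpr h')
  have hv2 : v ≠ u2 := fun h' => (hG.1 _ he2).1 (Sym2.mk_isDiag_iff.mpr h')
  have hv3 : v ≠ u3 := fun h' => (hG.1 _ he3).1 (Sym2.mk_isDiag_iff.mpr h')
  have I12 := indep_of_not_collinear (hG.2 v hv u1 hu1V u2 hu2V hv1 hv2 h12)
  have I13 := indep_of_not_collinear (hG.2 v hv u1 hu1V u3 hu3V hv1 hv3 h13)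
  have I23 := indep_of_not_collinear (hG.2 v hv u2 hu2V u3 hu3V hv2 hv3 h23)
  have I32 := indep_of_not_collinear (hG.2 v hv u3 hu3V u2 hu2V hv3 hv2 h23.symm)
  -- write u3 - v in the basis (u1 - v, u2 - v)
  have li : LinearIndependent ℝ ![u1 - v, u2 - v] := LinearIndependent.pair_iff.mpr I12
  have hcard : Fintype.card (Fin 2) = Module.finrank ℝ Pt := by
    simp [finrank_euclideanSpace_fin]
  set B := basisOfLinearIndependentOfCardEqFinrank li hcard with hB
  have hcoe : ⇑B = ![u1 - v, u2 - v] := coe_basisOfLinearIndependentOfCardEqFinrank li hcard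
  set x := B.repr (u3 - v) 0 with hx0
  set y := B.repr (u3 - v) 1 with hy0
  have h3eq : u3 - v = x • (u1 - v) + y • (u2 - v) := by
    have hsum := B.sum_repr (u3 - v)
    rw [Fin.sum_univ_two] at hsum
    rw [hx0, hy0, ← show B 0 = u1 - v from by rw [hcoe]; rfl,
      ← show B 1 = u2 - v from by rw [hcoe]; rfl]
    exact hsum.symm
  have hx : x ≠ 0 := by
    intro hx'
    have h0 : (-y) • (u2 - v) + (1:ℝ) • (u3 - v) = 0 := by
      rw [one_smul, h3eq, hx']; module
    exact one_ne_zero (I23 _ _ h0).2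
  have hy : y ≠ 0 := by
    intro hy'
    have h0 : (-x) • (u1 - v) + (1:ℝ) • (u3 - v) = 0 := by
      rw [one_smul, h3eq, hy']; module
    exact one_ne_zero (I13 _ _ h0).2
  rcases hx.lt_or_gt with hxneg | hxpos
  · rcases hy.lt_or_gt with hyneg | hypos
    · -- x < 0, y < 0 : u3 in the negative cone of (u1, u2)
      have key := no_other_edge G hG h v u1 u2 u3 hv he1 he2 I12 x y
        (mul_pos_of_neg_of_neg hxneg hyneg) h3eq
      exact ⟨u3, hu3V, deg_le_one_of_forall G u3 v key⟩
    · -- x < 0, y > 0 : u2 in a cone of (u1, u3)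
      have hU2 : u2 - v = (-x / y) • (u1 - v) + y⁻¹ • (u3 - v) := by
        rw [h3eq]
        match_scalars <;> field_simp <;> ring
      have hce : 0 < (-x / y) * y⁻¹ :=
        mul_pos (div_pos (neg_pos.mpr hxneg) hypos) (inv_pos.mpr hypos)
      have key := no_other_edge G hG h v u1 u3 u2 hv he1 he3 I13 _ _ hce hU2
      exact ⟨u2, hu2V, deg_le_one_of_forall G u2 v key⟩
  · rcases hy.lt_or_gt with hyneg | hypos
    · -- x > 0, y < 0 : u1 in a cone of (u3, u2)
      have hU1 : u1 - v = x⁻¹ • (u3 - v) + (-y / x) • (u2 - v) := by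
        rw [h3eq]
        match_scalars <;> field_simp <;> ring
      have hce : 0 < x⁻¹ * (-y / x) :=
        mul_pos (inv_pos.mpr hxpos) (div_pos (neg_pos.mpr hyneg) hxpos)
      have key := no_other_edge G hG h v u3 u2 u1 hv he3 he2 I32 _ _ hce hU1
      exact ⟨u1, hu1V, deg_le_one_of_forall G u1 v key⟩
    · -- x > 0, y > 0
      have key := no_other_edge G hG h v u1 u2 u3 hv he1 he2 I12 x y
        (mul_pos hxpos hypos) h3eq
      exact ⟨u3, hu3V, deg_le_one_of_forall G u3 v key⟩

lemma deg_eq (G : GeomGraph) (hG : G.IsGeometric) (v : Pt) :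
    deg G v = (G.edges.filter (fun e => v ∈ e)).card := by
  rw [deg]
  apply Finset.card_bij (fun w _ => s(v, w))
  · intro w hw
    simp only [nbhd, Finset.mem_filter] at hw
    rw [Finset.mem_filter]
    exact ⟨hw.2, Sym2.mem_mk_left _ _⟩
  · intro a ha b hb hab
    exact Sym2.congr_right.mp hab
  · intro e he
    rw [Finset.mem_filter] at he
    obtain ⟨heE, hve⟩ := he
    refine ⟨Sym2.Mem.other hve, ?_, Sym2.other_spec hve⟩
    simp only [nbhd, Finset.mem_filter]
    constructor
    · exact (hG.1 e heE).2 _ (Sym2.other_mem hve)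
    · rw [Sym2.other_spec hve]; exact heE

lemma card_filter_mem_eq_two (G : GeomGraph) (hG : G.IsGeometric) :
    ∀ e ∈ G.edges, (G.verts.filter (fun v => v ∈ e)).card = 2 := by
  intro e
  induction e using Sym2.ind with
  | _ a b =>
    intro he
    have hab : a ≠ b := fun h' => (hG.1 _ he).1 (Sym2.mk_isDiag_iff.mpr h')
    have haV : a ∈ G.verts := (hG.1 _ he).2 a (Sym2.mem_mk_left _ _)
    have hbV : b ∈ G.verts := (hG.1 _ he).2 b (Sym2.mem_mk_right _ _)
    have hset : G.verts.filter (fun v => v ∈ s(a,b)) = {a, b} := by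
      ext z
      simp only [Finset.mem_filter, Sym2.mem_iff, Finset.mem_insert, Finset.mem_singleton]
      constructor
      · rintro ⟨-, h'⟩; exact h'
      · rintro (rfl | rfl)
        exacts [⟨haV, Or.inl rfl⟩, ⟨hbV, Or.inr rfl⟩]
    rw [hset, Finset.card_pair hab]

lemma handshake (G : GeomGraph) (hG : G.IsGeometric) :
    ∑ v ∈ G.verts, deg G v = 2 * G.edges.card := by
  calc ∑ v ∈ G.verts, deg G v
      = ∑ v ∈ G.verts, (G.edges.filter (fun e => v ∈ e)).card :=
        Finset.sum_congr rfl (fun v _ => deg_eq G hG v)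
    _ = ∑ v ∈ G.verts, ∑ e ∈ G.edges, (if v ∈ e then 1 else 0) := by
        refine Finset.sum_congr rfl fun v _ => ?_
        rw [Finset.card_filter]
    _ = ∑ e ∈ G.edges, ∑ v ∈ G.verts, (if v ∈ e then 1 else 0) := Finset.sum_comm
    _ = ∑ e ∈ G.edges, (G.verts.filter (fun v => v ∈ e)).card := by
        refine Finset.sum_congr rfl fun e _ => ?_
        rw [Finset.card_filter]
    _ = ∑ e ∈ G.edges, 2 := Finset.sum_congr rfl (card_filter_mem_eq_two G hG)
    _ = 2 * G.edges.card := by rw [Finset.sum_const, smul_eq_mul, mul_comm]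

lemma main_aux : ∀ n (G : GeomGraph), G.IsGeometric →
    (∀ e ∈ G.edges, ∀ f ∈ G.edges, ¬ EdgesDisjoint e f) →
    G.verts.card = n → G.edges.card ≤ n := by
  intro n
  induction n using Nat.strong_induction_on with
  | _ n ih =>
    intro G hG h hn
    by_cases hlow : ∃ v ∈ G.verts, deg G v ≤ 1
    · obtain ⟨v, hv, hdv⟩ := hlow
      have hn1 : 1 ≤ n := by
        have := Finset.card_pos.mpr ⟨v, hv⟩
        omega
      have hG'geo : GeomGraph.IsGeometric
          ⟨G.verts.erase v, G.edges.filter (fun e => ¬ (v ∈ e))⟩ := by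
        constructor
        · intro e he
          rw [Finset.mem_filter] at he
          obtain ⟨heE, hve⟩ := he
          refine ⟨(hG.1 e heE).1, fun p hp => ?_⟩
          rw [Finset.mem_erase]
          exact ⟨fun h' => hve (h' ▸ hp), (hG.1 e heE).2 p hp⟩
        · intro p hp q hq r hr
          exact hG.2 p (Finset.mem_of_mem_erase hp) q (Finset.mem_of_mem_erase hq)
            r (Finset.mem_of_mem_erase hr)
      have h' : ∀ e ∈ G.edges.filter (fun e => ¬ (v ∈ e)),
          ∀ f ∈ G.edges.filter (fun e => ¬ (v ∈ e)), ¬ EdgesDisjoint e f := by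
        intro e he f hf
        exact h e (Finset.mem_of_mem_filter e he) f (Finset.mem_of_mem_filter f hf)
      have hvcard : (G.verts.erase v).card = n - 1 := by
        rw [Finset.card_erase_of_mem hv, hn]
      have hrec := ih (n - 1) (by omega)
        ⟨G.verts.erase v, G.edges.filter (fun e => ¬ (v ∈ e))⟩ hG'geo h' hvcard
      have hsplit := Finset.card_filter_add_card_filter_not
        (s := G.edges) (p := fun e => v ∈ e)
      have hdegeq : (G.edges.filter (fun e => v ∈ e)).card = deg G v := (deg_eq G hG v).symm
      simp only at hrec
      omega
    · push_neg at hlow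
      have hmax : ∀ v ∈ G.verts, deg G v ≤ 2 := by
        intro v hv
        by_contra hc
        obtain ⟨u, hu, hdu⟩ := exists_deg_le_one G hG h v hv (by omega)
        have := hlow u hu
        omega
      have hhs := handshake G hG
      have hsum : ∑ v ∈ G.verts, deg G v ≤ G.verts.card * 2 := by
        calc ∑ v ∈ G.verts, deg G v ≤ G.verts.card • 2 :=
              Finset.sum_le_card_nsmul _ _ _ hmax
          _ = G.verts.card * 2 := by rw [smul_eq_mul]
      omega

/-- **Hopf–Pannwitz, Erdős.** If every edge of a geometric graph `G` intersects all other
edges of `G`, then `|E(G)| ≤ |V(G)|`. -/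
theorem edge_bound_of_no_disjoint_edges (G : GeomGraph) (hG : G.IsGeometric)
    (h : ∀ e ∈ G.edges, ∀ f ∈ G.edges, ¬ EdgesDisjoint e f) :
    G.edges.card ≤ G.verts.card := by
  exact main_aux G.verts.card G hG h rfl

end
end

section
/- Let G be a locally convex geometric graph in which every vertex has degree at least 2. Then for every vertex v ∈ V(G): |DJ_ℓ(v)| + |DJ_r(v)| ≥ Σ_{w ∈ N(v)\{ℓ_v, r_v}} (deg w − 1) + |L(v)| + |R(v)|. -/
open scoped Classical

noncomputable section

/-- `ℓ` and `r` assign to each vertex `v` its leftmost and rightmost neighbors `ℓ v` and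
`r v`: the oriented angle `∠ (r v) v (ℓ v)` is the maximum of `∠ a v b` over `a, b ∈ N(v)`. -/
def IsLeftRight (G : GeomGraph) (ℓ r : Pt → Pt) : Prop :=
  ∀ v ∈ G.verts, ℓ v ∈ nbhd G v ∧ r v ∈ nbhd G v ∧
    ∀ a ∈ nbhd G v, ∀ b ∈ nbhd G v, oangle a v b ≤ oangle (r v) v (ℓ v)

/-- The set of edges of `G` incident to a vertex of `N(v)` and disjoint from the leftmost
edge `v (ℓ v)`. -/
def DJl (G : GeomGraph) (ℓ : Pt → Pt) (v : Pt) : Finset (Sym2 Pt) :=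
  G.edges.filter (fun e => (∃ w ∈ nbhd G v, w ∈ e) ∧ EdgesDisjoint e s(v, ℓ v))

/-- The set of edges of `G` incident to a vertex of `N(v)` and disjoint from the rightmost
edge `v (r v)`. -/
def DJr (G : GeomGraph) (r : Pt → Pt) (v : Pt) : Finset (Sym2 Pt) :=
  G.edges.filter (fun e => (∃ w ∈ nbhd G v, w ∈ e) ∧ EdgesDisjoint e s(v, r v))

/-- `L(v)`: the set of edges `(ℓ v) x ∈ E(G)` such that the angle `∠ x (ℓ v) v` is positive. -/
def Lset (G : GeomGraph) (ℓ : Pt → Pt) (v : Pt) : Finset (Sym2 Pt) :=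
  G.edges.filter (fun e => ∃ x, e = s(ℓ v, x) ∧ 0 < oangle x (ℓ v) v)

/-- `R(v)`: the set of edges `(r v) x ∈ E(G)` such that the angle `∠ x (r v) v` is negative. -/
def Rset (G : GeomGraph) (r : Pt → Pt) (v : Pt) : Finset (Sym2 Pt) :=
  G.edges.filter (fun e => ∃ x, e = s(r v, x) ∧ oangle x (r v) v < 0)

noncomputable def ar (x y : Pt) : ℝ :=
  (Module.Oriented.positiveOrientation : Orientation ℝ Pt (Fin 2)).areaForm x y

theorem ar_coord (x y : Pt) : ar x y = x 0 * y 1 - x 1 * y 0 := by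
  rw [ar, Orientation.areaForm_to_volumeForm,
    Orientation.volumeForm_robust (Module.Oriented.positiveOrientation)
      (EuclideanSpace.basisFun (Fin 2) ℝ) rfl]
  rw [Module.Basis.det_apply, Matrix.det_fin_two]
  simp [Module.Basis.toMatrix, EuclideanSpace.basisFun_toBasis]
  ring

theorem ar_eq_sin (x y : Pt) :
    ar x y = ‖x‖ * ‖y‖ * Real.Angle.sin
      ((Module.Oriented.positiveOrientation : Orientation ℝ Pt (Fin 2)).oangle x y) := by
  set o := (Module.Oriented.positiveOrientation : Orientation ℝ Pt (Fin 2))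
  by_cases hx : x = 0
  · simp [ar, hx]
  by_cases hy : y = 0
  · simp [ar, hy]
  rw [Orientation.oangle, Real.Angle.sin_coe, Complex.sin_arg, o.norm_kahler]
  have him : (o.kahler x y).im = ar x y := by
    simp [Orientation.kahler_apply_apply, ar]
    rfl
  rw [him]
  have h1 : ‖x‖ ≠ 0 := by simpa using hx
  have h2 : ‖y‖ ≠ 0 := by simpa using hy
  field_simp

theorem eg_oangle_eq (p q r : Pt) :
    EuclideanGeometry.oangle p q r =
      (Module.Oriented.positiveOrientation : Orientation ℝ Pt (Fin 2)).oangle (p - q) (r - q) := rfl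

theorem bridge {p q r : Pt} (h : ¬ Collinear ℝ ({p, q, r} : Set Pt)) :
    (0 < oangle p q r ↔ 0 < ar (p - q) (r - q)) ∧ oangle p q r ≠ 0 ∧ oangle p q r ≠ Real.pi ∧
      ar (p - q) (r - q) ≠ 0 := by
  have hzp : EuclideanGeometry.oangle p q r ≠ 0 ∧ EuclideanGeometry.oangle p q r ≠ Real.pi := by
    constructor <;> intro hh <;>
      exact h (EuclideanGeometry.oangle_eq_zero_or_eq_pi_iff_collinear.1 (by tauto))
  have hpq : p ≠ q := by
    intro hh; apply hzp.1; rw [hh, eg_oangle_eq]; simp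
  have hrq : r ≠ q := by
    intro hh; apply hzp.1; rw [hh, eg_oangle_eq]; simp
  have harsin : ar (p - q) (r - q) =
      ‖p - q‖ * ‖r - q‖ * Real.sin (oangle p q r) := by
    rw [ar_eq_sin, ← eg_oangle_eq]
    rw [show Real.Angle.sin (EuclideanGeometry.oangle p q r)
        = Real.sin (oangle p q r) by
      conv_lhs => rw [← Real.Angle.coe_toReal (EuclideanGeometry.oangle p q r)]
      rw [Real.Angle.sin_coe]; rfl]
  have hn1 : 0 < ‖p - q‖ := by simpa [sub_eq_zero] using hpq
  have hn2 : 0 < ‖r - q‖ := by simpa [sub_eq_zero] using hrq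
  have htR : -Real.pi < oangle p q r ∧ oangle p q r ≤ Real.pi :=
    ⟨Real.Angle.neg_pi_lt_toReal _, Real.Angle.toReal_le_pi _⟩
  have hne0 : oangle p q r ≠ 0 := by
    intro hh
    have hh' : (EuclideanGeometry.oangle p q r).toReal = 0 := hh
    exact hzp.1 (by rw [← Real.Angle.coe_toReal (EuclideanGeometry.oangle p q r), hh']; simp)
  have hnepi : oangle p q r ≠ Real.pi := by
    intro hh
    have hh' : (EuclideanGeometry.oangle p q r).toReal = Real.pi := hh
    exact hzp.2 (by rw [← Real.Angle.coe_toReal (EuclideanGeometry.oangle p q r), hh'])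
  constructor
  · constructor
    · intro hpos
      rw [harsin]
      have : 0 < Real.sin (oangle p q r) :=
        Real.sin_pos_of_pos_of_lt_pi hpos (lt_of_le_of_ne htR.2 hnepi)
      positivity
    · intro hpos
      by_contra hle
      have hlt : oangle p q r < 0 := lt_of_le_of_ne (not_lt.1 hle) hne0
      have : Real.sin (oangle p q r) < 0 := by
        have := Real.sin_pos_of_pos_of_lt_pi (x := -(oangle p q r)) (by linarith) (by linarith)
        rw [Real.sin_neg] at this; linarith
      nlinarith [harsin, mul_pos hn1 hn2]
  · refine ⟨hne0, hnepi, ?_⟩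
    rw [harsin]
    have : Real.sin (oangle p q r) ≠ 0 := by
      intro hh
      rcases Real.sin_eq_zero_iff_of_lt_of_lt (by linarith [htR.1, Real.pi_pos] : -Real.pi < oangle p q r) (lt_of_le_of_ne htR.2 hnepi) |>.1 hh with h0
      exact hne0 h0
    positivity

theorem bridge_neg {p q r : Pt} (h : ¬ Collinear ℝ ({p, q, r} : Set Pt)) :
    (oangle p q r < 0 ↔ ar (p - q) (r - q) < 0) := by
  obtain ⟨hiff, hne0, _, harne⟩ := bridge h
  constructor
  · intro hlt
    rcases lt_trichotomy (ar (p - q) (r - q)) 0 with h1 | h1 | h1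
    · exact h1
    · exact absurd h1 (fun hh => harne hh)
    · exact absurd (hiff.2 h1) (by linarith)
  · intro hlt
    rcases lt_trichotomy (oangle p q r) 0 with h1 | h1 | h1
    · exact h1
    · exact absurd h1 hne0
    · exact absurd (hiff.1 h1) (by linarith)

theorem ar_swap (x y : Pt) : ar x y = - ar y x := by simp [ar_coord]; ring

theorem ar_self (x : Pt) : ar x x = 0 := by simp [ar_coord]; ring

/-- Non-collinearity is invariant under re-listing the three points. -/
theorem ncl_swap {a b c : Pt} (h : ¬ Collinear ℝ ({a, b, c} : Set Pt)) :
    ¬ Collinear ℝ ({c, b, a} : Set Pt) := by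
  intro hh; apply h
  have : ({a, b, c} : Set Pt) = {c, b, a} := by ext x; simp; tauto
  rw [this]; exact hh

theorem ne12_of_ncl {a b c : Pt} (h : ¬ Collinear ℝ ({a, b, c} : Set Pt)) : a ≠ b := by
  intro hh; subst hh; apply h
  have : ({a, a, c} : Set Pt) = {a, c} := by simp
  rw [this]; exact collinear_pair ℝ a c

theorem ne32_of_ncl {a b c : Pt} (h : ¬ Collinear ℝ ({a, b, c} : Set Pt)) : c ≠ b :=
  ne12_of_ncl (ncl_swap h)

theorem ar_seg {u p a b y : Pt} (hy : y ∈ segment ℝ a b) :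
    ∃ t, 0 ≤ t ∧ t ≤ 1 ∧ y = a + t • (b - a) ∧
      ar u (y - p) = ar u (a - p) + t * (ar u (b - p) - ar u (a - p)) := by
  rw [segment_eq_image'] at hy
  obtain ⟨t, ht, hy⟩ := hy
  refine ⟨t, ht.1, ht.2, hy.symm, ?_⟩
  rw [← hy]
  simp [ar_coord, PiLp.add_apply, PiLp.sub_apply, PiLp.smul_apply, smul_eq_mul]
  ring

/-- Two segments are disjoint when one lies (weakly) on the nonneg side touching the line
only at `a`, the other weakly on the nonpos side touching only at `c`, with `a ≠ c`. -/
theorem disj1 {u p a b c d : Pt} (hb : 0 < ar u (b - p)) (hd : ar u (d - p) < 0)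
    (ha : ar u (a - p) = 0) (hc : ar u (c - p) = 0) (hac : a ≠ c) :
    segment ℝ a b ∩ segment ℝ c d = ∅ := by
  rw [Set.eq_empty_iff_forall_notMem]
  rintro y ⟨hy1, hy2⟩
  obtain ⟨t, ht0, _, hyt, hval1⟩ := ar_seg (u := u) (p := p) hy1
  obtain ⟨s, hs0, _, hys, hval2⟩ := ar_seg (u := u) (p := p) hy2
  rw [ha] at hval1
  rw [hc] at hval2
  have h1 : ar u (y - p) = t * ar u (b - p) := by rw [hval1]; ring
  have h2 : ar u (y - p) = s * ar u (d - p) := by rw [hval2]; ring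
  have ht : t = 0 := by nlinarith
  have hs : s = 0 := by nlinarith
  apply hac
  rw [ht] at hyt; rw [hs] at hys
  simp at hyt hys
  rw [← hyt, ← hys]

/-- Two segments are disjoint when one is strictly on the negative side and the
other is on the line. -/
theorem disj2 {u p a b c d : Pt} (ha : ar u (a - p) < 0) (hb : ar u (b - p) < 0)
    (hc : ar u (c - p) = 0) (hd : ar u (d - p) = 0) :
    segment ℝ a b ∩ segment ℝ c d = ∅ := by
  rw [Set.eq_empty_iff_forall_notMem]
  rintro y ⟨hy1, hy2⟩
  obtain ⟨t, ht0, ht1, _, hval1⟩ := ar_seg (u := u) (p := p) hy1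
  obtain ⟨s, _, _, _, hval2⟩ := ar_seg (u := u) (p := p) hy2
  rw [hc, hd] at hval2
  have h0 : ar u (y - p) = 0 := by rw [hval2]; ring
  rw [h0] at hval1
  rcases eq_or_lt_of_le ht0 with h | h
  · rw [← h] at hval1; simp at hval1; linarith
  · nlinarith [mul_neg_of_pos_of_neg h hb,
      mul_nonneg (by linarith : (0:ℝ) ≤ 1 - t) (by linarith : (0:ℝ) ≤ -(ar u (a - p)))]

private theorem ar_zero_right (u : Pt) : ar u 0 = 0 := by simp [ar_coord]

/-- A segment from a point strictly inside the cone cannot meet both boundary segments,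
unless it passes through the apex. -/
theorem disj3 {v lv rv w x : Pt}
    (hc0 : 0 < ar (rv - v) (lv - v))
    (hf : 0 < ar (rv - v) (w - v)) (hg : 0 < ar (w - v) (lv - v))
    (hvseg : v ∉ segment ℝ w x) :
    segment ℝ w x ∩ segment ℝ v lv = ∅ ∨ segment ℝ w x ∩ segment ℝ v rv = ∅ := by
  by_contra hcon
  push_neg at hcon
  obtain ⟨h1, h2⟩ := hcon
  obtain ⟨P, hP1, hP2⟩ := h1
  obtain ⟨Q, hQ1, hQ2⟩ := h2
  have hGW : ar (lv - v) (w - v) < 0 := by rw [ar_swap]; linarith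
  -- handle the degenerate case x = w
  rcases eq_or_ne x w with hxw | hxw
  · subst hxw
    rw [segment_same] at hQ1
    simp at hQ1
    subst hQ1
    obtain ⟨s, hs0, _, hQs, hFQ⟩ := ar_seg (u := rv - v) (p := v) hQ2
    rw [sub_self, ar_zero_right, ar_self] at hFQ
    simp at hFQ
    linarith
  -- parameters on the segment [v, lv] and [v, rv]
  obtain ⟨sp, hsp0, _, hPs, hFP⟩ := ar_seg (u := rv - v) (p := v) hP2
  obtain ⟨sp2, _, _, _, hGP⟩ := ar_seg (u := lv - v) (p := v) hP2
  obtain ⟨sq, hsq0, _, _, hFQ⟩ := ar_seg (u := rv - v) (p := v) hQ2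
  obtain ⟨sq2, hsq20, _, _, hGQ⟩ := ar_seg (u := lv - v) (p := v) hQ2
  rw [sub_self, ar_zero_right] at hFP hGP hFQ hGQ
  rw [ar_self] at hGP
  rw [ar_self] at hFQ
  have hGP0 : ar (lv - v) (P - v) = 0 := by rw [hGP]; ring
  have hFQ0 : ar (rv - v) (Q - v) = 0 := by rw [hFQ]; ring
  have hFP0 : ar (rv - v) (P - v) = sp * ar (rv - v) (lv - v) := by rw [hFP]; ring
  have hGQ0 : ar (lv - v) (Q - v) = sq2 * ar (lv - v) (rv - v) := by rw [hGQ]; ring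
  have hGQneg : ar (lv - v) (Q - v) ≤ 0 := by
    rw [hGQ0, ar_swap (lv - v)]; nlinarith
  have hFPpos : 0 ≤ ar (rv - v) (P - v) := by rw [hFP0]; positivity
  -- parameters on the segment [w, x]
  obtain ⟨tp, htp0, htp1, hPt, hFP1⟩ := ar_seg (u := rv - v) (p := v) hP1
  obtain ⟨tp', _, _, hPt', hGP1⟩ := ar_seg (u := lv - v) (p := v) hP1
  obtain ⟨tq, htq0, htq1, hQt, hFQ1⟩ := ar_seg (u := rv - v) (p := v) hQ1
  obtain ⟨tq', _, _, hQt', hGQ1⟩ := ar_seg (u := lv - v) (p := v) hQ1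
  have huniq : ∀ t t' : ℝ, w + t • (x - w) = w + t' • (x - w) → t = t' := by
    intro t t' h
    have h3 : (t - t') • (x - w) = 0 := by
      have := sub_eq_zero_of_eq h
      rw [← this]; module
    rcases smul_eq_zero.1 h3 with h4 | h4
    · linarith [sub_eq_zero.1 (by linarith [h4] : t - t' = (0:ℝ)) ]
    · exact absurd (sub_eq_zero.1 h4) hxw
  have htp' : tp' = tp := huniq _ _ (by rw [← hPt', ← hPt])
  have htq' : tq' = tq := huniq _ _ (by rw [← hQt', ← hQt])
  rw [htp'] at hGP1
  rw [htq'] at hGQ1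
  set FW := ar (rv - v) (w - v) with hFWdef
  set GW := ar (lv - v) (w - v) with hGWdef
  set DF := ar (rv - v) (x - v) - ar (rv - v) (w - v) with hDF
  set DG := ar (lv - v) (x - v) - ar (lv - v) (w - v) with hDG
  -- key linear relations
  have e1 : sp * ar (rv - v) (lv - v) = FW + tp * DF := by rw [← hFP0, hFP1]
  have e2 : 0 = GW + tp * DG := by rw [← hGP0, hGP1]
  have e3 : 0 = FW + tq * DF := by rw [← hFQ0, hFQ1]
  have e4 : GW + tq * DG ≤ 0 := by rw [← hGQ1]; exact hGQneg
  have htqpos : 0 < tq := by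
    rcases eq_or_lt_of_le htq0 with h | h
    · exfalso; rw [← h] at e3; simp at e3; linarith
    · exact h
  have hDFneg : DF < 0 := by
    by_contra h
    push_neg at h
    linarith [mul_nonneg htqpos.le h]
  have htppos : 0 < tp := by
    rcases eq_or_lt_of_le htp0 with h | h
    · exfalso; rw [← h] at e2; simp at e2; linarith
    · exact h
  have hDGpos : 0 < DG := by
    by_contra h
    push_neg at h
    linarith [mul_nonpos_of_nonneg_of_nonpos htppos.le h]
  have k1 : 0 ≤ FW + tp * DF := by rw [← hFP1]; exact hFPpos
  have htple : tp ≤ tq := by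
    by_contra h
    push_neg at h
    have := mul_lt_mul_of_neg_right h hDFneg
    linarith
  have htqle : tq ≤ tp := by
    by_contra h
    push_neg at h
    have := mul_lt_mul_of_pos_right h hDGpos
    linarith
  have htpq : tp = tq := le_antisymm htple htqle
  -- hence P = Q and both functionals vanish at P
  have hPF0 : ar (rv - v) (P - v) = 0 := by rw [hFP1, htpq, ← e3]
  have hsp0' : sp = 0 := by
    rw [hFP1, htpq, ← e3] at hFP0
    rcases mul_eq_zero.1 hFP0.symm with h | h
    · exact h
    · linarith
  have hPv : P = v := by rw [hPs, hsp0']; simp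
  rw [hPv] at hP1
  exact hvseg hP1

theorem coe_oangle_toReal (a b c : Pt) :
    ((oangle a b c : ℝ) : Real.Angle).toReal = oangle a b c := by
  rw [show ((oangle a b c : ℝ) : Real.Angle) = EuclideanGeometry.oangle a b c from
    Real.Angle.coe_toReal _]
  rfl


theorem oangle_aba (a b : Pt) : oangle a b a = 0 := by
  show (EuclideanGeometry.oangle a b a).toReal = 0
  rw [eg_oangle_eq]
  rw [Orientation.oangle_self]
  simp

theorem cone_lemma {v lv rv w : Pt}
    (hc0 : 0 < ar (rv - v) (lv - v))
    (hmax1 : oangle rv v w ≤ oangle rv v lv)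
    (hmax2 : oangle w v lv ≤ oangle rv v lv)
    (hnc1 : ¬Collinear ℝ ({rv, v, w} : Set Pt))
    (hnc2 : ¬Collinear ℝ ({w, v, lv} : Set Pt))
    (hnc3 : ¬Collinear ℝ ({rv, v, lv} : Set Pt))
    (hvout : v ∉ convexHull ℝ ({rv, lv, w} : Set Pt)) :
    0 < ar (rv - v) (w - v) ∧ 0 < ar (w - v) (lv - v) := by
  obtain ⟨hiff3, hne3, hpi3, har3⟩ := bridge hnc3
  obtain ⟨hiff1, hne1, hpi1, har1⟩ := bridge hnc1
  obtain ⟨hiff2, hne2, hpi2, har2⟩ := bridge hnc2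
  have hrv : rv ≠ v := ne12_of_ncl hnc3
  have hlv : lv ≠ v := ne32_of_ncl hnc3
  have hw : w ≠ v := ne32_of_ncl hnc1
  have hM : 0 < oangle rv v lv := hiff3.2 hc0
  have hMpi : oangle rv v lv < Real.pi :=
    lt_of_le_of_ne (Real.Angle.toReal_le_pi _) hpi3
  rcases lt_trichotomy (ar (rv - v) (w - v)) 0 with hfneg | hf0 | hfpos
  · rcases lt_trichotomy (ar (w - v) (lv - v)) 0 with hgneg | hg0 | hgpos
    · -- both negative: v is inside the convex hull of {rv, lv, w}
      exfalso
      set c0 := ar (rv - v) (lv - v) with hc0def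
      set l1 : ℝ := - ar (w - v) (lv - v) with hl1
      set l2 : ℝ := - ar (rv - v) (w - v) with hl2
      have hl1pos : 0 < l1 := by rw [hl1]; linarith
      have hl2pos : 0 < l2 := by rw [hl2]; linarith
      have key : l1 • (rv - v) + l2 • (lv - v) + c0 • (w - v) = (0 : Pt) := by
        ext i
        fin_cases i <;>
          simp only [hl1, hl2, hc0def, ar_coord, PiLp.add_apply, PiLp.sub_apply,
            PiLp.smul_apply, smul_eq_mul, PiLp.zero_apply, Fin.mk_zero, Fin.mk_one] <;>
          ring
      apply hvout
      have hmem : ∀ i : Fin 3, (![rv, lv, w] i) ∈ ({rv, lv, w} : Set Pt) := by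
        intro i; fin_cases i <;> simp
      have hcm := Finset.centerMass_mem_convexHull (Finset.univ : Finset (Fin 3))
        (w := ![l1, l2, c0]) (z := ![rv, lv, w])
        (by intro i _; fin_cases i <;> simp <;> linarith)
        (by simp [Fin.sum_univ_three]; linarith)
        (fun i _ => hmem i)
      have hcmv : (Finset.univ : Finset (Fin 3)).centerMass ![l1, l2, c0] ![rv, lv, w] = v := by
        rw [Finset.centerMass]
        simp only [Fin.sum_univ_three, Matrix.cons_val_zero, Matrix.cons_val_one,
          Matrix.head_cons, Matrix.cons_val_two, Matrix.tail_cons]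
        have hsum : l1 • rv + l2 • lv + c0 • w = (l1 + l2 + c0) • v := by
          have h2 : l1 • rv + l2 • lv + c0 • w - (l1 + l2 + c0) • v
              = l1 • (rv - v) + l2 • (lv - v) + c0 • (w - v) := by module
          rw [key] at h2
          exact sub_eq_zero.1 h2
        rw [hsum, smul_smul, inv_mul_cancel₀ (by linarith), one_smul]
      rw [hcmv] at hcm
      exact hcm
    · exact absurd hg0 har2
    · -- f < 0, g > 0 : contradicts maximality of ∡ rv v lv via w
      exfalso
      have hβ : 0 < oangle w v lv := hiff2.2 hgpos
      have hβpi : oangle w v lv < Real.pi :=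
        lt_of_le_of_ne (Real.Angle.toReal_le_pi _) hpi2
      have hα : oangle rv v w < 0 := (bridge_neg hnc1).2 hfneg
      have hαpi : -Real.pi < oangle rv v w := Real.Angle.neg_pi_lt_toReal _
      have hadd := EuclideanGeometry.oangle_add hrv hw hlv
      have hcoe : (↑(oangle rv v w + oangle w v lv) : Real.Angle)
          = ↑(oangle rv v lv) := by
        rw [Real.Angle.coe_add]
        unfold oangle
        rw [Real.Angle.coe_toReal, Real.Angle.coe_toReal, Real.Angle.coe_toReal]
        exact hadd
      have h1 : (↑(oangle rv v w + oangle w v lv) : Real.Angle).toReal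
          = oangle rv v w + oangle w v lv := by
        rw [Real.Angle.toReal_coe_eq_self_iff]
        constructor <;> linarith
      rw [hcoe, coe_oangle_toReal] at h1
      linarith
  · exact absurd hf0 har1
  · rcases lt_trichotomy (ar (w - v) (lv - v)) 0 with hgneg | hg0 | hgpos
    · -- f > 0, g < 0 : w is beyond lv; contradicts maximality via ∡ rv v w
      exfalso
      have hα : 0 < oangle rv v w := hiff1.2 hfpos
      have hαpi : oangle rv v w < Real.pi :=
        lt_of_le_of_ne (Real.Angle.toReal_le_pi _) hpi1
      have hnc2' : ¬Collinear ℝ ({lv, v, w} : Set Pt) := ncl_swap hnc2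
      obtain ⟨hiff4, hne4, hpi4, har4⟩ := bridge hnc2'
      have harlw : 0 < ar (lv - v) (w - v) := by
        have := ar_swap (w - v) (lv - v)
        linarith
      have hδ : 0 < oangle lv v w := hiff4.2 harlw
      have hδpi : oangle lv v w < Real.pi :=
        lt_of_le_of_ne (Real.Angle.toReal_le_pi _) hpi4
      have hadd := EuclideanGeometry.oangle_add hrv hlv hw
      have hcoe : (↑(oangle rv v lv + oangle lv v w) : Real.Angle)
          = ↑(oangle rv v w) := by
        rw [Real.Angle.coe_add]
        unfold oangle
        rw [Real.Angle.coe_toReal, Real.Angle.coe_toReal, Real.Angle.coe_toReal]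
        exact hadd
      set S := oangle rv v lv + oangle lv v w with hS
      rcases le_or_gt S Real.pi with hSle | hSgt
      · have h1 : (↑S : Real.Angle).toReal = S := by
          rw [Real.Angle.toReal_coe_eq_self_iff]
          constructor <;> linarith
        rw [hcoe, coe_oangle_toReal] at h1
        linarith [hmax1]
      · have hcoe2 : (↑S : Real.Angle) = ↑(S - 2 * Real.pi) := by
          rw [Real.Angle.coe_sub]
          rw [Real.Angle.coe_two_pi]
          simp
        have h1 : (↑(S - 2 * Real.pi) : Real.Angle).toReal = S - 2 * Real.pi := by
          rw [Real.Angle.toReal_coe_eq_self_iff]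
          constructor <;> linarith [Real.pi_pos]
        rw [← hcoe2, hcoe, coe_oangle_toReal] at h1
        linarith [Real.pi_pos]
    · exact absurd hg0 har2
    · exact ⟨hfpos, hgpos⟩

/-- **Lemma 1.** For a locally convex geometric graph with minimum degree at least 2 and for
every vertex `v`: `|DJ_ℓ(v)| + |DJ_r(v)| ≥ Σ_{w ∈ N(v)\{ℓ_v, r_v}} (deg w − 1) + |L(v)| + |R(v)|`. -/
theorem DJl_add_DJr_lower_bound (G : GeomGraph) (hG : G.IsGeometric)
    (hconv : G.LocallyConvex) (hdeg : ∀ v ∈ G.verts, 2 ≤ deg G v)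
    (ℓ r : Pt → Pt) (hlr : IsLeftRight G ℓ r) :
    ∀ v ∈ G.verts,
      (∑ w ∈ nbhd G v \ {ℓ v, r v}, (deg G w - 1)) + (Lset G ℓ v).card + (Rset G r v).card ≤
        (DJl G ℓ v).card + (DJr G r v).card := by
  intro v hv
  classical
  obtain ⟨hGedges, hncl⟩ := hG
  obtain ⟨hlmem, hrmem, hmax⟩ := hlr v hv
  set lv := ℓ v with hlvdef
  set rv := r v with hrvdef
  -- basic neighborhood facts
  have hnbhd_mem : ∀ u w : Pt, w ∈ nbhd G u ↔ w ∈ G.verts ∧ s(u, w) ∈ G.edges := by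
    intro u w; simp [nbhd]
  have hnb_vert : ∀ w ∈ nbhd G v, w ∈ G.verts := fun w hw => ((hnbhd_mem v w).1 hw).1
  have hnb_ne : ∀ w ∈ nbhd G v, w ≠ v := by
    intro w hw hh
    obtain ⟨_, he⟩ := (hnbhd_mem v w).1 hw
    rw [hh] at he
    exact (hGedges _ he).1 (by simp)
  have hlv_ne : lv ≠ v := hnb_ne lv hlmem
  have hrv_ne : rv ≠ v := hnb_ne rv hrmem
  have hlv_vert : lv ∈ G.verts := hnb_vert lv hlmem
  have hrv_vert : rv ∈ G.verts := hnb_vert rv hrmem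
  -- the maximal angle is positive
  have hMpos : 0 < oangle rv v lv := by
    have h2 : 1 < (nbhd G v).card := lt_of_lt_of_le one_lt_two (hdeg v hv)
    obtain ⟨a, ha, b, hb, hab⟩ := Finset.one_lt_card.1 h2
    have hncab : ¬ Collinear ℝ ({a, v, b} : Set Pt) :=
      hncl a (hnb_vert a ha) v hv b (hnb_vert b hb) (hnb_ne a ha) hab
        (Ne.symm (hnb_ne b hb))
    obtain ⟨hiff, hne0, _, harne⟩ := bridge hncab
    rcases lt_trichotomy (oangle a v b) 0 with h | h | h
    · have har : ar (a - v) (b - v) < 0 := (bridge_neg hncab).1 h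
      have hncba : ¬ Collinear ℝ ({b, v, a} : Set Pt) := ncl_swap hncab
      have har2 : 0 < ar (b - v) (a - v) := by
        have := ar_swap (a - v) (b - v); linarith
      have : 0 < oangle b v a := ((bridge hncba).1).2 har2
      exact lt_of_lt_of_le this (hmax b hb a ha)
    · exact absurd h hne0
    · exact lt_of_lt_of_le h (hmax a ha b hb)
  have hlvrv : lv ≠ rv := by
    intro hh
    rw [hh] at hMpos
    have : EuclideanGeometry.oangle rv v rv = 0 := by
      rcases eq_or_ne rv v with h | h
      · rw [h]; simp [eg_oangle_eq]
      · rw [eg_oangle_eq]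
        exact Orientation.oangle_self _ _
    have : oangle rv v rv = 0 := by unfold oangle; rw [this]; simp
    linarith
  have hnc3 : ¬ Collinear ℝ ({rv, v, lv} : Set Pt) :=
    hncl rv hrv_vert v hv lv hlv_vert hrv_ne (Ne.symm hlvrv) (Ne.symm hlv_ne)
  have hc0 : 0 < ar (rv - v) (lv - v) := ((bridge hnc3).1).1 hMpos
  -- the cone facts
  have cone : ∀ w ∈ nbhd G v, w ≠ lv → w ≠ rv →
      0 < ar (rv - v) (w - v) ∧ 0 < ar (w - v) (lv - v) := by
    intro w hw hwl hwr
    have hwv : w ∈ G.verts := hnb_vert w hw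
    have hwne : w ≠ v := hnb_ne w hw
    refine cone_lemma hc0 (hmax rv hrmem w hw) (hmax w hw lv hlmem)
      (hncl rv hrv_vert v hv w hwv hrv_ne (Ne.symm hwr) (Ne.symm hwne))
      (hncl w hwv v hv lv hlv_vert hwne hwl (Ne.symm hlv_ne)) hnc3 ?_
    intro hmem
    apply hconv v hv
    apply convexHull_mono (s := ({rv, lv, w} : Set Pt)) ?_ hmem
    rintro y (rfl | rfl | rfl)
    · exact hrmem
    · exact hlmem
    · exact hw
  -- edge representation
  have edge_rep : ∀ e ∈ G.edges, ∃ a b : Pt, e = s(a, b) ∧ a ≠ b ∧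
      a ∈ G.verts ∧ b ∈ G.verts := by
    intro e
    induction e using Sym2.ind with
    | _ a b =>
      intro he
      obtain ⟨hd, hmem⟩ := hGedges _ he
      exact ⟨a, b, rfl, by simpa using hd, hmem a (by simp), hmem b (by simp)⟩
  -- the finsets
  set M := nbhd G v \ {lv, rv} with hMdef
  have hMfact : ∀ w, w ∈ M ↔ w ∈ nbhd G v ∧ w ≠ lv ∧ w ≠ rv := by
    intro w; simp [hMdef, not_or]
  set E1 := G.edges.filter (fun e => (∃ w ∈ M, w ∈ e) ∧ v ∉ e) with hE1def
  set E2 := E1.filter (fun e => ∀ x ∈ e, x ∈ M) with hE2def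
  set A := DJl G ℓ v with hAdef
  set B := DJr G r v with hBdef
  set Ls := Lset G ℓ v with hLsdef
  set Rs := Rset G r v with hRsdef
  -- PART I : the counting bound  ∑ (deg - 1) ≤ |E1| + |E2|
  have hvnbM : v ∉ M := by
    intro h
    exact hnb_ne v ((hMfact v).1 h).1 rfl
  have part1 : (∑ w ∈ M, (deg G w - 1)) ≤ E1.card + E2.card := by
    have hdeg1 : ∀ w ∈ M, deg G w - 1 = (nbhd G w \ {v}).card := by
      intro w hw
      have hwnb := ((hMfact w).1 hw).1
      have hvw : v ∈ nbhd G w := by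
        rw [hnbhd_mem]
        exact ⟨hv, by rw [Sym2.eq_swap]; exact ((hnbhd_mem v w).1 hwnb).2⟩
      rw [Finset.card_sdiff_of_subset (by simpa using hvw)]
      simp [deg]
    have step1 : ∀ w ∈ M, (nbhd G w \ {v}).card ≤
        (E1.filter (fun e => w ∈ e)).card := by
      intro w hw
      have hwnb := ((hMfact w).1 hw).1
      have hwne : w ≠ v := hnb_ne w hwnb
      apply Finset.card_le_card_of_injOn (fun x => s(w, x))
      · intro x hx
        simp only [Finset.mem_coe, Finset.mem_sdiff, Finset.mem_singleton] at hx
        obtain ⟨hx1, hx2⟩ := hx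
        have hxe : s(w, x) ∈ G.edges := ((hnbhd_mem w x).1 hx1).2
        simp only [Finset.mem_coe, Finset.mem_filter, hE1def]
        refine ⟨⟨hxe, ⟨w, hw, by simp⟩, ?_⟩, by simp⟩
        rw [Sym2.mem_iff]
        rintro (h | h)
        · exact hwne h.symm
        · exact hx2 h.symm
      · intro x hx y hy hxy
        simp only at hxy
        rcases Sym2.eq_iff.1 hxy with ⟨_, h⟩ | ⟨h1, h2⟩
        · exact h
        · rw [← h1, h2]
    have swap : (∑ w ∈ M, (E1.filter (fun e => w ∈ e)).card)
        = ∑ e ∈ E1, (M.filter (fun w => w ∈ e)).card := by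
      simp_rw [Finset.card_filter]
      exact Finset.sum_comm
    have step2 : ∀ e ∈ E1, (M.filter (fun w => w ∈ e)).card ≤
        1 + (if e ∈ E2 then 1 else 0) := by
      intro e he
      have heE : e ∈ G.edges := Finset.mem_filter.1 he |>.1
      obtain ⟨a, b, rfl, hab, hav, hbv⟩ := edge_rep e heE
      by_cases h2 : s(a, b) ∈ E2
      · rw [if_pos h2]
        calc (M.filter (fun w => w ∈ s(a, b))).card ≤ ({a, b} : Finset Pt).card := by
              apply Finset.card_le_card
              intro y hy
              have := (Finset.mem_filter.1 hy).2
              rw [Sym2.mem_iff] at this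
              simpa using this
          _ ≤ 2 := Finset.card_insert_le _ _ |>.trans (by simp)
      · rw [if_neg h2]
        have : ∃ x ∈ s(a, b), x ∉ M := by
          by_contra hcon
          push_neg at hcon
          exact h2 (Finset.mem_filter.2 ⟨he, hcon⟩)
        obtain ⟨x, hxe, hxM⟩ := this
        rw [Sym2.mem_iff] at hxe
        rcases hxe with rfl | rfl
        · calc (M.filter (fun w => w ∈ s(x, b))).card ≤ ({b} : Finset Pt).card := by
                apply Finset.card_le_card
                intro y hy
                obtain ⟨hyM, hye⟩ := Finset.mem_filter.1 hy
                rw [Sym2.mem_iff] at hye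
                rcases hye with rfl | rfl
                · exact absurd hyM hxM
                · simp
            _ = 1 := by simp
        · calc (M.filter (fun w => w ∈ s(a, x))).card ≤ ({a} : Finset Pt).card := by
                apply Finset.card_le_card
                intro y hy
                obtain ⟨hyM, hye⟩ := Finset.mem_filter.1 hy
                rw [Sym2.mem_iff] at hye
                rcases hye with rfl | rfl
                · simp
                · exact absurd hyM hxM
            _ = 1 := by simp
    have hE2sub : E2 ⊆ E1 := Finset.filter_subset _ _
    calc (∑ w ∈ M, (deg G w - 1)) = ∑ w ∈ M, (nbhd G w \ {v}).card :=
          Finset.sum_congr rfl hdeg1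
      _ ≤ ∑ w ∈ M, (E1.filter (fun e => w ∈ e)).card := Finset.sum_le_sum step1
      _ = ∑ e ∈ E1, (M.filter (fun w => w ∈ e)).card := swap
      _ ≤ ∑ e ∈ E1, (1 + if e ∈ E2 then 1 else 0) := Finset.sum_le_sum step2
      _ = E1.card + E2.card := by
          rw [Finset.sum_add_distrib]
          congr 1
          · simp
          · rw [← Finset.card_filter]
            congr 1
            rw [Finset.filter_mem_eq_inter, Finset.inter_eq_right.2 hE2sub]
  -- membership helpers for DJl / DJr
  have hmemA : ∀ e ∈ G.edges, (∃ u ∈ nbhd G v, u ∈ e) → EdgesDisjoint e s(v, lv) → e ∈ A := by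
    intro e he h1 h2
    rw [hAdef]
    simp only [DJl, Finset.mem_filter]
    exact ⟨he, h1, by rw [← hlvdef]; exact h2⟩
  have hmemB : ∀ e ∈ G.edges, (∃ u ∈ nbhd G v, u ∈ e) → EdgesDisjoint e s(v, rv) → e ∈ B := by
    intro e he h1 h2
    rw [hBdef]
    simp only [DJr, Finset.mem_filter]
    exact ⟨he, h1, by rw [← hrvdef]; exact h2⟩
  -- PART II : geometric inclusions
  have hE1AB : ∀ e ∈ E1, e ∈ A ∪ B := by
    intro e he
    obtain ⟨heE, ⟨w, hwM, hwe⟩, hve⟩ := Finset.mem_filter.1 he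
    obtain ⟨a, b, rfl, hab, hav, hbv⟩ := edge_rep _ heE
    obtain ⟨hwnb, hwl, hwr⟩ := (hMfact w).1 hwM
    have hconeW := cone w hwnb hwl hwr
    have hvna : v ≠ a := fun h => hve (by rw [h]; simp)
    have hvnb : v ≠ b := fun h => hve (by rw [h]; simp)
    have hnAB : ¬ Collinear ℝ ({a, v, b} : Set Pt) :=
      hncl a hav v hv b hbv (Ne.symm hvna) hab hvnb
    have hvseg : v ∉ segment ℝ a b := fun h => hnAB (mem_segment_iff_wbtw.1 h).collinear
    have hwab : w = a ∨ w = b := by simpa [Sym2.mem_iff] using hwe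
    rcases hwab with rfl | rfl
    · rcases disj3 hc0 hconeW.1 hconeW.2 hvseg with hd | hd
      · exact Finset.mem_union.2 (Or.inl (hmemA _ heE ⟨w, hwnb, by simp⟩ hd))
      · exact Finset.mem_union.2 (Or.inr (hmemB _ heE ⟨w, hwnb, by simp⟩ hd))
    · have hvseg' : v ∉ segment ℝ w a := by rw [segment_symm]; exact hvseg
      rcases disj3 hc0 hconeW.1 hconeW.2 hvseg' with hd | hd
      · rw [segment_symm] at hd
        exact Finset.mem_union.2 (Or.inl (hmemA _ heE ⟨w, hwnb, by simp⟩ hd))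
      · rw [segment_symm] at hd
        exact Finset.mem_union.2 (Or.inr (hmemB _ heE ⟨w, hwnb, by simp⟩ hd))
  have hLs_shape : ∀ e ∈ Ls, ∃ x, e = s(lv, x) ∧ 0 < oangle x lv v ∧ x ≠ lv ∧
      x ∈ G.verts ∧ x ≠ v ∧ e ∈ G.edges := by
    intro e he
    rw [hLsdef] at he
    simp only [Lset, Finset.mem_filter] at he
    obtain ⟨heE, x, hex, hang⟩ := he
    rw [← hlvdef] at hex hang
    refine ⟨x, hex, hang, ?_, ?_, ?_, heE⟩
    · intro hh
      subst hex
      exact (hGedges _ heE).1 (by rw [hh]; simp)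
    · subst hex
      exact (hGedges _ heE).2 x (by simp)
    · intro hh
      rw [hh] at hang
      rw [oangle_aba] at hang
      linarith
  have hRs_shape : ∀ e ∈ Rs, ∃ x, e = s(rv, x) ∧ oangle x rv v < 0 ∧ x ≠ rv ∧
      x ∈ G.verts ∧ x ≠ v ∧ e ∈ G.edges := by
    intro e he
    rw [hRsdef] at he
    simp only [Rset, Finset.mem_filter] at he
    obtain ⟨heE, x, hex, hang⟩ := he
    rw [← hrvdef] at hex hang
    refine ⟨x, hex, hang, ?_, ?_, ?_, heE⟩
    · intro hh
      subst hex
      exact (hGedges _ heE).1 (by rw [hh]; simp)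
    · subst hex
      exact (hGedges _ heE).2 x (by simp)
    · intro hh
      rw [hh] at hang
      rw [oangle_aba] at hang
      linarith
  have hLsB : ∀ e ∈ Ls, e ∈ B := by
    intro e he
    obtain ⟨x, rfl, hang, hxl, hxv, hxnv, heE⟩ := hLs_shape e he
    have hnc : ¬ Collinear ℝ ({x, lv, v} : Set Pt) :=
      hncl x hxv lv hlv_vert v hv hxl hxnv hlv_ne
    have har : 0 < ar (x - lv) (v - lv) := ((bridge hnc).1).1 hang
    have t1 : ar (lv - v) (x - lv) = ar (x - lv) (v - lv) := by simp [ar_coord]; ring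
    have t2 : ar (lv - v) (rv - lv) = - ar (rv - v) (lv - v) := by simp [ar_coord]; ring
    have t3 : ar (lv - v) (lv - lv) = 0 := by simp [ar_coord]
    have t4 : ar (lv - v) (v - lv) = 0 := by simp [ar_coord]; ring
    have hd : segment ℝ lv x ∩ segment ℝ v rv = ∅ :=
      disj1 (by rw [t1]; linarith) (by rw [t2]; linarith) t3 t4 hlv_ne
    exact hmemB _ heE ⟨lv, hlmem, by simp⟩ hd
  have hRsA : ∀ e ∈ Rs, e ∈ A := by
    intro e he
    obtain ⟨x, rfl, hang, hxr, hxv, hxnv, heE⟩ := hRs_shape e he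
    have hnc : ¬ Collinear ℝ ({x, rv, v} : Set Pt) :=
      hncl x hxv rv hrv_vert v hv hxr hxnv hrv_ne
    have har : ar (x - rv) (v - rv) < 0 := (bridge_neg hnc).1 hang
    have t1 : ar (v - rv) (x - rv) = - ar (x - rv) (v - rv) := by simp [ar_coord]; ring
    have t2 : ar (v - rv) (lv - rv) = - ar (rv - v) (lv - v) := by simp [ar_coord]; ring
    have t3 : ar (v - rv) (rv - rv) = 0 := by simp [ar_coord]
    have t4 : ar (v - rv) (v - rv) = 0 := ar_self _
    have hd : segment ℝ rv x ∩ segment ℝ v lv = ∅ :=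
      disj1 (by rw [t1]; linarith) (by rw [t2]; linarith) t3 t4 hrv_ne
    exact hmemA _ heE ⟨rv, hrmem, by simp⟩ hd
  have hE2AB : ∀ e ∈ E2, e ∈ A ∩ B := by
    intro e he
    obtain ⟨heE1, hall⟩ := Finset.mem_filter.1 he
    have heE : e ∈ G.edges := (Finset.mem_filter.1 heE1).1
    obtain ⟨a, b, rfl, hab, hav, hbv⟩ := edge_rep _ heE
    have haM := hall a (by simp)
    have hbM := hall b (by simp)
    obtain ⟨hanb, hal, har'⟩ := (hMfact a).1 haM
    obtain ⟨hbnb, hbl, hbr⟩ := (hMfact b).1 hbM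
    have hca := cone a hanb hal har'
    have hcb := cone b hbnb hbl hbr
    have sA : ar (lv - v) (a - v) < 0 := by
      have := ar_swap (a - v) (lv - v); linarith [hca.2]
    have sB : ar (lv - v) (b - v) < 0 := by
      have := ar_swap (b - v) (lv - v); linarith [hcb.2]
    have sA' : ar (v - rv) (a - v) < 0 := by
      have t : ar (v - rv) (a - v) = - ar (rv - v) (a - v) := by simp [ar_coord]; ring
      rw [t]; linarith [hca.1]
    have sB' : ar (v - rv) (b - v) < 0 := by
      have t : ar (v - rv) (b - v) = - ar (rv - v) (b - v) := by simp [ar_coord]; ring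
      rw [t]; linarith [hcb.1]
    have z1 : ar (lv - v) (v - v) = 0 := by simp [ar_coord]
    have z2 : ar (lv - v) (lv - v) = 0 := ar_self _
    have z3 : ar (v - rv) (v - v) = 0 := by simp [ar_coord]
    have z4 : ar (v - rv) (rv - v) = 0 := by simp [ar_coord]; ring
    have hdL : segment ℝ a b ∩ segment ℝ v lv = ∅ := disj2 sA sB z1 z2
    have hdR : segment ℝ a b ∩ segment ℝ v rv = ∅ := disj2 sA' sB' z3 z4
    exact Finset.mem_inter.2
      ⟨hmemA _ heE ⟨a, hanb, by simp⟩ hdL, hmemB _ heE ⟨a, hanb, by simp⟩ hdR⟩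
  -- PART III : disjointness of E1, Ls, Rs
  have hd1 : Disjoint E1 Ls := by
    rw [Finset.disjoint_left]
    intro e heE1 heLs
    obtain ⟨x, hex, hang, hxl, hxv, hxnv, heE⟩ := hLs_shape e heLs
    obtain ⟨_, ⟨w, hwM, hwe⟩, hve⟩ := Finset.mem_filter.1 heE1
    obtain ⟨hwnb, hwl, hwr⟩ := (hMfact w).1 hwM
    subst hex
    rw [Sym2.mem_iff] at hwe
    rcases hwe with rfl | rfl
    · exact hwl rfl
    · have hcw := cone w hwnb hwl hwr
      have hnc : ¬ Collinear ℝ ({w, lv, v} : Set Pt) :=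
        hncl w hxv lv hlv_vert v hv hxl hxnv hlv_ne
      have har : 0 < ar (w - lv) (v - lv) := ((bridge hnc).1).1 hang
      have t : ar (w - lv) (v - lv) = - ar (w - v) (lv - v) := by simp [ar_coord]; ring
      rw [t] at har
      linarith [hcw.2]
  have hd2 : Disjoint E1 Rs := by
    rw [Finset.disjoint_left]
    intro e heE1 heRs
    obtain ⟨x, hex, hang, hxr, hxv, hxnv, heE⟩ := hRs_shape e heRs
    obtain ⟨_, ⟨w, hwM, hwe⟩, hve⟩ := Finset.mem_filter.1 heE1
    obtain ⟨hwnb, hwl, hwr⟩ := (hMfact w).1 hwM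
    subst hex
    rw [Sym2.mem_iff] at hwe
    rcases hwe with rfl | rfl
    · exact hwr rfl
    · have hcw := cone w hwnb hwl hwr
      have hnc : ¬ Collinear ℝ ({w, rv, v} : Set Pt) :=
        hncl w hxv rv hrv_vert v hv hxr hxnv hrv_ne
      have har : ar (w - rv) (v - rv) < 0 := (bridge_neg hnc).1 hang
      have t : ar (w - rv) (v - rv) = ar (rv - v) (w - v) := by simp [ar_coord]; ring
      rw [t] at har
      linarith [hcw.1]
  have hd3 : Disjoint Ls Rs := by
    rw [Finset.disjoint_left]
    intro e heLs heRs
    obtain ⟨x, hex, hangL, hxl, hxv, hxnv, heE⟩ := hLs_shape e heLs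
    obtain ⟨y, hey, hangR, hyr, hyv, hynv, _⟩ := hRs_shape e heRs
    rw [hex] at hey
    rcases Sym2.eq_iff.1 hey with ⟨h1, _⟩ | ⟨h1, h2⟩
    · exact hlvrv h1
    · subst hex
      rw [h2] at hangL
      have hnc : ¬ Collinear ℝ ({rv, lv, v} : Set Pt) :=
        hncl rv hrv_vert lv hlv_vert v hv (Ne.symm hlvrv) hrv_ne hlv_ne
      have har : 0 < ar (rv - lv) (v - lv) := ((bridge hnc).1).1 hangL
      have t : ar (rv - lv) (v - lv) = - ar (rv - v) (lv - v) := by simp [ar_coord]; ring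
      rw [t] at har
      linarith
  -- PART IV : assembling the cardinalities
  have hsubU : E1 ∪ Ls ∪ Rs ⊆ A ∪ B := by
    intro e he
    rcases Finset.mem_union.1 he with h | h
    · rcases Finset.mem_union.1 h with h | h
      · exact hE1AB e h
      · exact Finset.mem_union.2 (Or.inr (hLsB e h))
    · exact Finset.mem_union.2 (Or.inl (hRsA e h))
  have cardU : (E1 ∪ Ls ∪ Rs).card = E1.card + Ls.card + Rs.card := by
    rw [Finset.card_union_of_disjoint (Finset.disjoint_union_left.2 ⟨hd2, hd3⟩),
      Finset.card_union_of_disjoint hd1]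
  have h1 : E1.card + Ls.card + Rs.card ≤ (A ∪ B).card := by
    rw [← cardU]
    exact Finset.card_le_card hsubU
  have h2 : E2.card ≤ (A ∩ B).card :=
    Finset.card_le_card (fun e he => hE2AB e he)
  have h3 : (A ∪ B).card + (A ∩ B).card = A.card + B.card :=
    Finset.card_union_add_card_inter A B
  omega



end
end

section
/- Let G be a locally convex geometric graph in which every vertex has degree at least 2. Then Σ_{v ∈ V(G)} |L'(v)| = Σ_{v ∈ V(G)} α_ℓ(v)(α_ℓ(v) − 1)/2 and Σ_{v ∈ V(G)} |R'(v)| = Σ_{v ∈ V(G)} α_r(v)(α_r(v) − 1)/2. -/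
open scoped Classical

noncomputable section

/-- `α_ℓ(v)`: the number of `w ∈ N(v)` with `ℓ w = v`. -/
def alphal (G : GeomGraph) (ℓ : Pt → Pt) (v : Pt) : ℕ :=
  ((nbhd G v).filter (fun w => ℓ w = v)).card

/-- `α_r(v)`: the number of `w ∈ N(v)` with `r w = v`. -/
def alphar (G : GeomGraph) (r : Pt → Pt) (v : Pt) : ℕ :=
  ((nbhd G v).filter (fun w => r w = v)).card

/-- `L'(v)`: the set of edges `(ℓ v) w ∈ E(G)` with `∠ w (ℓ v) v > 0` and `ℓ w = ℓ v`. -/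
def Lpset (G : GeomGraph) (ℓ : Pt → Pt) (v : Pt) : Finset (Sym2 Pt) :=
  G.edges.filter (fun e => ∃ w, e = s(ℓ v, w) ∧ 0 < oangle w (ℓ v) v ∧ ℓ w = ℓ v)

/-- `R'(v)`: the set of edges `(r v) w ∈ E(G)` with `∠ w (r v) v < 0` and `r w = r v`. -/
def Rpset (G : GeomGraph) (r : Pt → Pt) (v : Pt) : Finset (Sym2 Pt) :=
  G.edges.filter (fun e => ∃ w, e = s(r v, w) ∧ oangle w (r v) v < 0 ∧ r w = r v)

lemma RealAngle.neg_toReal' {θ : Real.Angle} (h : θ ≠ (Real.pi : Real.Angle)) :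
    (-θ).toReal = -θ.toReal := by
  have h1 := Real.Angle.neg_pi_lt_toReal θ
  have h2 : θ.toReal < Real.pi :=
    lt_of_le_of_ne (Real.Angle.toReal_le_pi θ)
      (fun hh => h (Real.Angle.toReal_eq_pi_iff.mp hh))
  conv_lhs => rw [← Real.Angle.coe_toReal θ]
  rw [← Real.Angle.coe_neg,
    Real.Angle.toReal_coe_eq_self_iff.mpr ⟨by linarith, by linarith⟩]

lemma mem_nbhd' {G : GeomGraph} {v w : Pt} :
    w ∈ nbhd G v ↔ w ∈ G.verts ∧ s(v, w) ∈ G.edges := Finset.mem_filter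

lemma nbhd_subset (G : GeomGraph) (v : Pt) : nbhd G v ⊆ G.verts :=
  Finset.filter_subset _ _

lemma nbhd_symm {G : GeomGraph} (hG : G.IsGeometric) {v w : Pt} (h : w ∈ nbhd G v) :
    v ∈ nbhd G w := by
  rw [mem_nbhd'] at h ⊢
  refine ⟨(hG.1 _ h.2).2 v (by simp), ?_⟩
  rw [Sym2.eq_swap]
  exact h.2

lemma ne_of_mem_nbhd {G : GeomGraph} (hG : G.IsGeometric) {v w : Pt} (h : w ∈ nbhd G v) :
    w ≠ v := by
  intro hwv
  have h2 := (hG.1 _ (mem_nbhd'.mp h).2).1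
  rw [hwv] at h2
  exact h2 (by simp [Sym2.mk_isDiag_iff])

lemma oangle_props {G : GeomGraph} (hG : G.IsGeometric) {u v w : Pt}
    (hu : u ∈ G.verts) (hv : v ∈ G.verts) (hw : w ∈ G.verts)
    (huv : u ≠ v) (huw : u ≠ w) (hvw : v ≠ w) :
    oangle w u v ≠ 0 ∧ oangle v u w = - oangle w u v := by
  have hcol : ¬ Collinear ℝ ({w, u, v} : Set Pt) :=
    hG.2 w hw u hu v hv huw.symm hvw.symm huv
  have hne : EuclideanGeometry.oangle w u v ≠ 0 ∧
      EuclideanGeometry.oangle w u v ≠ (Real.pi : Real.Angle) := by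
    constructor <;> intro h <;>
      exact hcol (EuclideanGeometry.oangle_eq_zero_or_eq_pi_iff_collinear.mp (by tauto))
  refine ⟨fun h => hne.1 (Real.Angle.toReal_eq_zero_iff.mp h), ?_⟩
  rw [oangle, oangle, EuclideanGeometry.oangle_rev w u v, RealAngle.neg_toReal' hne.2]

/-- Counting a tournament-like relation on `A × A` gives `|A|(|A|-1)`, doubled. -/
lemma double_count {α : Type*} (A : Finset α) (P : α → α → Prop)
    (hirr : ∀ v ∈ A, ¬ P v v)
    (hanti : ∀ v ∈ A, ∀ w ∈ A, v ≠ w → (P v w ↔ ¬ P w v)) :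
    2 * ((A ×ˢ A).filter (fun p => P p.1 p.2)).card = A.card * A.card - A.card := by
  classical
  set S := (A ×ˢ A).filter (fun p => P p.1 p.2) with hS
  set T := (A ×ˢ A).filter (fun p => P p.2 p.1) with hT
  have hcard : S.card = T.card := by
    refine Finset.card_nbij' Prod.swap Prod.swap ?_ ?_ ?_ ?_
    · rintro ⟨v, w⟩ hp
      simp only [Finset.mem_coe, hS, hT, Finset.mem_filter, Finset.mem_product] at hp ⊢
      exact ⟨⟨hp.1.2, hp.1.1⟩, hp.2⟩
    · rintro ⟨v, w⟩ hp
      simp only [Finset.mem_coe, hS, hT, Finset.mem_filter, Finset.mem_product] at hp ⊢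
      exact ⟨⟨hp.1.2, hp.1.1⟩, hp.2⟩
    · rintro ⟨v, w⟩ _; rfl
    · rintro ⟨v, w⟩ _; rfl
  have hdisj : Disjoint S T := by
    rw [Finset.disjoint_left]
    rintro ⟨v, w⟩ hpS hpT
    simp only [hS, hT, Finset.mem_filter, Finset.mem_product] at hpS hpT
    by_cases hvw : v = w
    · exact hirr v hpS.1.1 (hvw ▸ hpS.2)
    · exact ((hanti v hpS.1.1 w hpS.1.2 hvw).mp hpS.2) hpT.2
  have hunion : S ∪ T = A.offDiag := by
    ext ⟨v, w⟩
    simp only [hS, hT, Finset.mem_union, Finset.mem_filter, Finset.mem_product,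
      Finset.mem_offDiag]
    constructor
    · rintro (⟨⟨hv, hw⟩, h⟩ | ⟨⟨hv, hw⟩, h⟩) <;> refine ⟨hv, hw, ?_⟩ <;> intro hvw <;>
        subst hvw <;> exact hirr v hv h
    · rintro ⟨hv, hw, hvw⟩
      by_cases h : P v w
      · exact Or.inl ⟨⟨hv, hw⟩, h⟩
      · exact Or.inr ⟨⟨hv, hw⟩, by
          by_contra h2
          exact h ((hanti v hv w hw hvw).mpr (by
            intro h3
            exact h2 h3))⟩
  have := Finset.card_union_of_disjoint hdisj
  rw [hunion, Finset.offDiag_card] at this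
  omega

/-- The main counting lemma, applied once for `ℓ` and once for `r`. -/
lemma sum_count (G : GeomGraph) (hG : G.IsGeometric) (ℓ : Pt → Pt)
    (hl : ∀ v ∈ G.verts, ℓ v ∈ nbhd G v)
    (q : ℝ → Prop) (hq0 : ¬ q 0) (hqneg : ∀ x : ℝ, x ≠ 0 → (q x ↔ ¬ q (-x))) :
    (∑ v ∈ G.verts, ((G.edges.filter (fun e => ∃ w, e = s(ℓ v, w) ∧
        q (oangle w (ℓ v) v) ∧ ℓ w = ℓ v)).card : ℝ)) =
      ∑ v ∈ G.verts, (alphal G ℓ v : ℝ) * ((alphal G ℓ v : ℝ) - 1) / 2 := by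
  classical
  set A : Pt → Finset Pt := fun u => (nbhd G u).filter (fun w => ℓ w = u) with hA
  -- Step 1: identify each `L'(v)` with a set of neighbors of `ℓ v`.
  have step1 : ∀ v ∈ G.verts,
      (G.edges.filter (fun e => ∃ w, e = s(ℓ v, w) ∧
          q (oangle w (ℓ v) v) ∧ ℓ w = ℓ v)).card
        = ((A (ℓ v)).filter (fun w => q (oangle w (ℓ v) v))).card := by
    intro v hv
    have himg : G.edges.filter (fun e => ∃ w, e = s(ℓ v, w) ∧
          q (oangle w (ℓ v) v) ∧ ℓ w = ℓ v)
        = ((A (ℓ v)).filter (fun w => q (oangle w (ℓ v) v))).image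
            (fun w => s(ℓ v, w)) := by
      ext e
      simp only [Finset.mem_filter, Finset.mem_image, hA, mem_nbhd']
      constructor
      · rintro ⟨he, w, rfl, hq, hlw⟩
        refine ⟨w, ⟨⟨⟨(hG.1 _ he).2 w (by simp), he⟩, hlw⟩, hq⟩, rfl⟩
      · rintro ⟨w, ⟨⟨⟨hwV, hwe⟩, hlw⟩, hq⟩, rfl⟩
        exact ⟨hwe, w, rfl, hq, hlw⟩
    rw [himg, Finset.card_image_of_injOn]
    intro w hw w' hw' hee
    simp only [Finset.mem_coe, Finset.mem_filter, hA, mem_nbhd'] at hw hw'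
    have hwne : w' ≠ ℓ v := ne_of_mem_nbhd hG (mem_nbhd'.mpr hw'.1.1)
    rcases Sym2.eq_iff.mp hee with ⟨_, h⟩ | ⟨h, _⟩
    · exact h
    · exact absurd h.symm hwne
  -- Step 2: group the sum by fibers of `ℓ`.
  have hmaps : ∀ v ∈ G.verts, ℓ v ∈ G.verts := fun v hv => nbhd_subset G v (hl v hv)
  have hfiber : ∀ u ∈ G.verts, G.verts.filter (fun v => ℓ v = u) = A u := by
    intro u hu
    ext v
    simp only [Finset.mem_filter, hA, mem_nbhd']
    constructor
    · rintro ⟨hv, rfl⟩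
      have := (mem_nbhd'.mp (hl v hv)).2
      rw [Sym2.eq_swap] at this
      exact ⟨⟨hv, this⟩, rfl⟩
    · rintro ⟨⟨hv, _⟩, h⟩
      exact ⟨hv, h⟩
  calc (∑ v ∈ G.verts, ((G.edges.filter (fun e => ∃ w, e = s(ℓ v, w) ∧
        q (oangle w (ℓ v) v) ∧ ℓ w = ℓ v)).card : ℝ))
      = ∑ v ∈ G.verts,
          (((A (ℓ v)).filter (fun w => q (oangle w (ℓ v) v))).card : ℝ) := by
        exact Finset.sum_congr rfl (fun v hv => by rw [step1 v hv])
    _ = ∑ u ∈ G.verts, ∑ v ∈ G.verts.filter (fun v => ℓ v = u),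
          (((A (ℓ v)).filter (fun w => q (oangle w (ℓ v) v))).card : ℝ) :=
        (Finset.sum_fiberwise_of_maps_to hmaps _).symm
    _ = ∑ u ∈ G.verts, (alphal G ℓ u : ℝ) * ((alphal G ℓ u : ℝ) - 1) / 2 := by
        refine Finset.sum_congr rfl (fun u hu => ?_)
        rw [hfiber u hu]
        have hterm : ∀ v ∈ A u,
            (((A (ℓ v)).filter (fun w => q (oangle w (ℓ v) v))).card : ℝ)
              = (((A u).filter (fun w => q (oangle w u v))).card : ℝ) := by
          intro v hv
          have : ℓ v = u := (Finset.mem_filter.mp hv).2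
          rw [this]
        rw [Finset.sum_congr rfl hterm]
        -- Now count pairs.
        have hsum : (((A u) ×ˢ (A u)).filter (fun p => q (oangle p.2 u p.1))).card
            = ∑ v ∈ A u, (((A u).filter (fun w => q (oangle w u v))).card) := by
          rw [Finset.card_filter, Finset.sum_product]
          exact Finset.sum_congr rfl fun v _ => (Finset.card_filter _ _).symm
        have hAu : ∀ v ∈ A u, v ∈ G.verts ∧ v ≠ u := by
          intro v hv
          have hv' := (Finset.mem_filter.mp hv).1
          exact ⟨nbhd_subset G u hv', ne_of_mem_nbhd hG hv'⟩
        have hdc := double_count (A u) (fun v w => q (oangle w u v))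
          (fun v hv => by
            show ¬ q (oangle v u v)
            have : oangle v u v = 0 := by
              simp [oangle, EuclideanGeometry.oangle]
            rw [this]; exact hq0)
          (fun v hv w hw hvw => by
            show q (oangle w u v) ↔ ¬ q (oangle v u w)
            obtain ⟨hvV, hvu⟩ := hAu v hv
            obtain ⟨hwV, hwu⟩ := hAu w hw
            obtain ⟨hne0, hneg⟩ := oangle_props hG hu hvV hwV hvu.symm hwu.symm hvw
            rw [hneg]
            exact hqneg _ hne0)
        have hle : (A u).card ≤ (A u).card * (A u).card := by
          rcases Nat.eq_zero_or_pos (A u).card with h | h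
          · simp [h]
          · exact Nat.le_mul_of_pos_left _ h
        have halpha : alphal G ℓ u = (A u).card := rfl
        have hcast : (2 : ℝ) * ((((A u) ×ˢ (A u)).filter
            (fun p => q (oangle p.2 u p.1))).card : ℝ)
            = ((A u).card : ℝ) * ((A u).card : ℝ) - ((A u).card : ℝ) := by
          have := hdc
          have h2 : ((2 * (((A u) ×ˢ (A u)).filter
              (fun p => q (oangle p.2 u p.1))).card : ℕ) : ℝ)
              = (((A u).card * (A u).card - (A u).card : ℕ) : ℝ) := by
            exact_mod_cast congrArg (Nat.cast : ℕ → ℝ) this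
          rw [Nat.cast_mul, Nat.cast_sub hle, Nat.cast_mul] at h2
          exact_mod_cast h2
        rw [← Nat.cast_sum, ← hsum, halpha]
        have := hcast
        push_cast at this ⊢
        linarith
  
/-- **Lemma 2.** For a locally convex geometric graph with minimum degree at least 2:
`Σ_v |L'(v)| = Σ_v α_ℓ(v)(α_ℓ(v)−1)/2` and `Σ_v |R'(v)| = Σ_v α_r(v)(α_r(v)−1)/2`. -/
theorem sum_Lpset_and_Rpset_eq (G : GeomGraph) (hG : G.IsGeometric)
    (hconv : G.LocallyConvex) (hdeg : ∀ v ∈ G.verts, 2 ≤ deg G v)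
    (ℓ r : Pt → Pt) (hlr : IsLeftRight G ℓ r) :
    (∑ v ∈ G.verts, ((Lpset G ℓ v).card : ℝ)) =
        (∑ v ∈ G.verts, (alphal G ℓ v : ℝ) * ((alphal G ℓ v : ℝ) - 1) / 2) ∧
      (∑ v ∈ G.verts, ((Rpset G r v).card : ℝ)) =
        (∑ v ∈ G.verts, (alphar G r v : ℝ) * ((alphar G r v : ℝ) - 1) / 2) := by
  constructor
  · have := sum_count G hG ℓ (fun v hv => (hlr v hv).1)
      (fun x => 0 < x) (lt_irrefl 0)
      (fun x hx => by
        show 0 < x ↔ ¬ 0 < -x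
        rw [neg_pos]
        constructor
        · intro h h'; linarith
        · intro h
          rcases lt_trichotomy x 0 with h' | h' | h'
          · exact absurd h' h
          · exact absurd h' hx
          · exact h')
    simpa [Lpset] using this
  · have := sum_count G hG r (fun v hv => (hlr v hv).2.1)
      (fun x => x < 0) (lt_irrefl 0)
      (fun x hx => by
        show x < 0 ↔ ¬ -x < 0
        rw [neg_lt_zero]
        constructor
        · intro h h'; linarith
        · intro h
          rcases lt_trichotomy x 0 with h' | h' | h'
          · exact h'
          · exact absurd h' hx
          · exact absurd h' h)
    simpa [Rpset, alphar, alphal] using this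

end
end

section
/- Let G be a locally convex geometric graph in which every vertex has degree at least 2, with n = |V(G)| and e = |E(G)| (note that n_ℓ < n and n_r < n in this situation). Then Σ_{v ∈ V(G)} ( |DJ_ℓ(v)| + |DJ_r(v)| ) ≥ (2e−n)²/(2(n − n_ℓ)) + (2e−n)²/(2(n − n_r)) − (2e − n) + Σ_{v ∈ V(G)} (δ_ℓ(v) + δ_r(v)). -/
open scoped Classical

noncomputable section

/-- `δ_ℓ(v) = 1` if there is an edge `(ℓ v) x` with `∠ x (ℓ v) v > 0` and `ℓ x ≠ ℓ v`,
and `δ_ℓ(v) = 0` otherwise. -/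
def deltal (G : GeomGraph) (ℓ : Pt → Pt) (v : Pt) : ℕ :=
  if ∃ x, s(ℓ v, x) ∈ G.edges ∧ 0 < oangle x (ℓ v) v ∧ ℓ x ≠ ℓ v then 1 else 0

/-- `δ_r(v) = 1` if there is an edge `(r v) x` with `∠ x (r v) v < 0` and `r x ≠ r v`,
and `δ_r(v) = 0` otherwise. -/
def deltar (G : GeomGraph) (r : Pt → Pt) (v : Pt) : ℕ :=
  if ∃ x, s(r v, x) ∈ G.edges ∧ oangle x (r v) v < 0 ∧ r x ≠ r v then 1 else 0

/-- `n_ℓ`: the number of vertices `v` such that `ℓ w = v` for every `w ∈ N(v)`. -/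
def nl (G : GeomGraph) (ℓ : Pt → Pt) : ℕ :=
  (G.verts.filter (fun v => ∀ w ∈ nbhd G v, ℓ w = v)).card

/-- `n_r`: the number of vertices `v` such that `r w = v` for every `w ∈ N(v)`. -/
def nr (G : GeomGraph) (r : Pt → Pt) : ℕ :=
  (G.verts.filter (fun v => ∀ w ∈ nbhd G v, r w = v)).card

namespace Cor2Aux

open Finset

/-! ### The planar cross product -/

noncomputable def cross (u v : Pt) : ℝ := u 0 * v 1 - u 1 * v 0

lemma sub_app (u v : Pt) (i : Fin 2) : (u - v) i = u i - v i := rfl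

lemma cross_self (u : Pt) : cross u u = 0 := by simp only [cross]; ring

lemma cross_zero_right (u : Pt) : cross u 0 = 0 := by
  have h0 : ∀ i, (0 : Pt) i = 0 := fun _ => rfl
  simp [cross, h0]

lemma cross_swap (u v : Pt) : cross v u = - cross u v := by simp only [cross]; ring

lemma cross_flip (x y z : Pt) : cross (x - y) (z - y) = - cross (y - x) (z - x) := by
  simp only [cross, sub_app]; ring

lemma cross_cyc (a w b : Pt) : cross (a - w) (b - w) = - cross (a - b) (w - b) := by
  simp only [cross, sub_app]; ring

lemma cross_key (a b c : Pt) : cross b c • a + cross a b • c = cross a c • b := by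
  ext i
  fin_cases i <;>
  · simp only [cross, PiLp.add_apply, PiLp.smul_apply, smul_eq_mul, Fin.zero_eta, Fin.mk_one]
    ring

/-- Transitivity of "counterclockwise of" within an open half plane. -/
lemma cross_trans {a b c : Pt} (f : Pt →L[ℝ] ℝ) (ha : 0 < f a) (hb : 0 < f b) (hc : 0 < f c)
    (hab : 0 < cross a b) (hbc : 0 < cross b c) : 0 < cross a c := by
  have h := congrArg f (cross_key a b c)
  simp only [map_add, map_smul, smul_eq_mul] at h
  nlinarith

/-! ### Relating the sign of `oangle` with `cross` -/

lemma areaForm_eq_cross (u v : Pt) :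
    (Module.Oriented.positiveOrientation : Orientation ℝ Pt (Fin 2)).areaForm u v = cross u v := by
  rw [Orientation.areaForm_to_volumeForm,
    (Module.Oriented.positiveOrientation :
      Orientation ℝ Pt (Fin 2)).volumeForm_robust (EuclideanSpace.basisFun (Fin 2) ℝ) rfl,
    Module.Basis.det_apply,
    Matrix.det_fin_two]
  simp only [Module.Basis.toMatrix_apply, OrthonormalBasis.coe_toBasis_repr_apply,
    EuclideanSpace.basisFun_repr, Matrix.cons_val', Matrix.cons_val_zero, Matrix.empty_val',
    Matrix.cons_val_fin_one, Matrix.cons_val_one, Matrix.head_cons, Matrix.head_fin_const]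
  simp only [cross]
  ring

lemma oangle_cross {x y z : Pt} (h : ¬ Collinear ℝ ({x, y, z} : Set Pt)) :
    (0 < oangle x y z ↔ 0 < cross (x - y) (z - y)) ∧ cross (x - y) (z - y) ≠ 0 ∧
      oangle x y z ≠ 0 ∧ oangle x y z ≠ Real.pi := by
  have hai : AffineIndependent ℝ ![x, y, z] := affineIndependent_iff_not_collinear_set.mpr h
  have hne : EuclideanGeometry.oangle x y z ≠ 0 ∧
      EuclideanGeometry.oangle x y z ≠ (Real.pi : Real.Angle) :=
    EuclideanGeometry.oangle_ne_zero_and_ne_pi_iff_affineIndependent.mpr hai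
  have hoan : EuclideanGeometry.oangle x y z =
      ((Complex.arg ((Module.Oriented.positiveOrientation :
        Orientation ℝ Pt (Fin 2)).kahler (x - y) (z - y)) : ℝ) : Real.Angle) := rfl
  set K := (Module.Oriented.positiveOrientation :
    Orientation ℝ Pt (Fin 2)).kahler (x - y) (z - y) with hK
  have him : K.im = cross (x - y) (z - y) := by
    rw [hK, ← areaForm_eq_cross, Orientation.kahler_apply_apply]
    simp
  have harg0 : Complex.arg K ≠ 0 := by
    intro h0
    exact hne.1 (by rw [hoan, h0]; norm_cast)
  have hargpi : Complex.arg K ≠ Real.pi := by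
    intro h0
    exact hne.2 (by rw [hoan, h0])
  have himne : K.im ≠ 0 := by
    intro h0
    rcases lt_or_ge K.re 0 with hre | hre
    · exact hargpi (Complex.arg_eq_pi_iff.mpr ⟨hre, h0⟩)
    · exact harg0 (Complex.arg_eq_zero_iff.mpr ⟨hre, h0⟩)
  have htr : oangle x y z = Complex.arg K := by
    show (EuclideanGeometry.oangle x y z).toReal = _
    rw [hoan]
    exact Real.Angle.toReal_coe_eq_self_iff.mpr ⟨Complex.neg_pi_lt_arg _, Complex.arg_le_pi _⟩
  constructor
  · rw [htr, ← him]
    constructor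
    · intro hpos
      rcases himne.lt_or_gt with hlt | hlt
      · exact absurd (Complex.arg_neg_iff.mpr hlt) (by linarith)
      · exact hlt
    · intro hpos
      rcases (harg0 : Complex.arg K ≠ 0).lt_or_gt with hlt | hlt
      · exact absurd (Complex.arg_neg_iff.mp hlt) (by linarith)
      · exact hlt
  · refine ⟨by rw [← him]; exact himne, ?_, ?_⟩
    · rw [htr]; exact harg0
    · rw [htr]; exact hargpi

lemma coe_angle_inj {x y : ℝ} (h : (x : Real.Angle) = y) (hb : |x - y| < 2 * Real.pi) : x = y := by
  obtain ⟨k, hk⟩ := Real.Angle.angle_eq_iff_two_pi_dvd_sub.mp h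
  have hπ : 0 < Real.pi := Real.pi_pos
  have hk0 : k = 0 := by
    by_contra hk0
    have h1 : (1 : ℝ) ≤ |(k : ℝ)| := by exact_mod_cast Int.one_le_abs hk0
    rw [hk, abs_mul, abs_mul] at hb
    rw [abs_of_pos (by norm_num : (0:ℝ) < 2), abs_of_pos hπ] at hb
    nlinarith
  rw [hk0] at hk
  push_cast at hk
  linarith

/-! ### Segment disjointness via an affine functional -/

lemma seg_disjoint (φ : Pt → ℝ)
    (hφ : ∀ (t : ℝ) (u x : Pt), φ ((1 - t) • u + t • x) = (1 - t) * φ u + t * φ x)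
    {p₁ p₂ q₁ q₂ : Pt} (h1 : φ p₁ = 0) (h2 : φ p₂ < 0) (h3 : φ q₁ = 0) (h4 : 0 < φ q₂)
    (hne : p₁ ≠ q₁) : segment ℝ q₁ q₂ ∩ segment ℝ p₁ p₂ = ∅ := by
  rw [Set.eq_empty_iff_forall_notMem]
  rintro p ⟨hq, hp⟩
  rw [segment_eq_image] at hp hq
  obtain ⟨s, hs, hsp⟩ := hp
  obtain ⟨t, ht, htp⟩ := hq
  have e1 : φ p = s * φ p₂ := by rw [← hsp, hφ, h1]; ring
  have e2 : φ p = t * φ q₂ := by rw [← htp, hφ, h3]; ring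
  have key : s * φ p₂ = t * φ q₂ := by rw [← e1, e2]
  have hsle : s * φ p₂ ≤ 0 := mul_nonpos_of_nonneg_of_nonpos hs.1 h2.le
  have htge : 0 ≤ t * φ q₂ := mul_nonneg ht.1 h4.le
  have hz1 : s * φ p₂ = 0 := le_antisymm hsle (key ▸ htge)
  have hz2 : t * φ q₂ = 0 := by rw [← key]; exact hz1
  have hs0 : s = 0 := by
    rcases mul_eq_zero.mp hz1 with h | h
    · exact h
    · exact absurd h h2.ne
  have ht0 : t = 0 := by
    rcases mul_eq_zero.mp hz2 with h | h
    · exact h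
    · exact absurd h h4.ne'
  apply hne
  have hp1 : p = p₁ := by rw [← hsp, hs0]; simp
  have hq1 : p = q₁ := by rw [← htp, ht0]; simp
  rw [← hp1, hq1]

/-! ### Graph basics -/

variable {G : GeomGraph}

lemma mem_nbhd {v w : Pt} : w ∈ nbhd G v ↔ w ∈ G.verts ∧ s(v, w) ∈ G.edges := Finset.mem_filter

lemma nbhd_subset_verts {v w : Pt} (h : w ∈ nbhd G v) : w ∈ G.verts := (mem_nbhd.mp h).1

lemma edge_of_nbhd {v w : Pt} (h : w ∈ nbhd G v) : s(v, w) ∈ G.edges := (mem_nbhd.mp h).2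

lemma ne_of_nbhd (hG : G.IsGeometric) {v w : Pt} (h : w ∈ nbhd G v) : w ≠ v := by
  intro he
  exact (hG.1 _ (edge_of_nbhd h)).1 (Sym2.mk_isDiag_iff.mpr he.symm)

lemma verts_of_nbhd (hG : G.IsGeometric) {v w : Pt} (h : w ∈ nbhd G v) : v ∈ G.verts :=
  (hG.1 _ (edge_of_nbhd h)).2 v (Sym2.mem_mk_left _ _)

lemma nbhd_symm (hG : G.IsGeometric) {v w : Pt} (h : w ∈ nbhd G v) : v ∈ nbhd G w := by
  refine mem_nbhd.mpr ⟨verts_of_nbhd hG h, ?_⟩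
  rw [Sym2.eq_swap]
  exact edge_of_nbhd h

lemma noncol3 (hG : G.IsGeometric) {v a b : Pt} (hv : v ∈ G.verts) (ha : a ∈ nbhd G v)
    (hb : b ∈ nbhd G v) (hab : a ≠ b) : ¬ Collinear ℝ ({a, v, b} : Set Pt) :=
  hG.2 a (nbhd_subset_verts ha) v hv b (nbhd_subset_verts hb)
    (ne_of_nbhd hG ha) hab (ne_of_nbhd hG hb).symm

lemma cross_nbhd (hG : G.IsGeometric) {v a b : Pt} (hv : v ∈ G.verts) (ha : a ∈ nbhd G v)
    (hb : b ∈ nbhd G v) (hab : a ≠ b) :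
    (0 < oangle a v b ↔ 0 < cross (a - v) (b - v)) ∧ cross (a - v) (b - v) ≠ 0 ∧
      oangle a v b ≠ 0 ∧ oangle a v b ≠ Real.pi :=
  oangle_cross (noncol3 hG hv ha hb hab)

lemma exists_sep (hG : G.IsGeometric) (hconv : G.LocallyConvex) {v : Pt} (hv : v ∈ G.verts) :
    ∃ f : Pt →L[ℝ] ℝ, ∀ w ∈ nbhd G v, 0 < f (w - v) := by
  have hfin : ((nbhd G v : Finset Pt) : Set Pt).Finite := (nbhd G v).finite_toSet
  obtain ⟨f, u, hfv, hfw⟩ := geometric_hahn_banach_point_closed (convex_convexHull ℝ _)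
    (    hfin.isClosed_convexHull ℝ) (hconv v hv)
  refine ⟨f, fun w hw => ?_⟩
  have h1 : u < f w := hfw w (subset_convexHull ℝ _ (by exact_mod_cast hw))
  have h2 : f v < f w := lt_trans hfv h1
  simpa [map_sub] using sub_pos.mpr h2

/-! ### The cone property of leftmost/rightmost edges -/

lemma oangle_self_toReal (x y : Pt) : oangle x y x = 0 := by
  show (EuclideanGeometry.oangle x y x).toReal = 0
  rw [EuclideanGeometry.oangle_self_left_right, Real.Angle.toReal_zero]

lemma cone (hG : G.IsGeometric) (hconv : G.LocallyConvex)
    (hdeg : ∀ v ∈ G.verts, 2 ≤ deg G v)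
    {ℓ r : Pt → Pt} (hlr : IsLeftRight G ℓ r) {v : Pt} (hv : v ∈ G.verts) :
    ∀ w ∈ nbhd G v, (w ≠ ℓ v → 0 < cross (w - v) (ℓ v - v)) ∧
      (w ≠ r v → cross (w - v) (r v - v) < 0) := by
  obtain ⟨hl, hr, hmax⟩ := hlr v hv
  obtain ⟨f, hf⟩ := exists_sep hG hconv hv
  have hlv : ℓ v ≠ v := ne_of_nbhd hG hl
  have hrv : r v ≠ v := ne_of_nbhd hG hr
  have hlr_ne : ℓ v ≠ r v := by
    intro he
    obtain ⟨a, haa, b, hbb, hab⟩ := Finset.one_lt_card.mp (lt_of_lt_of_le one_lt_two (hdeg v hv))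
    obtain ⟨c, hc, hcl⟩ : ∃ c ∈ nbhd G v, c ≠ ℓ v := by
      by_cases h : a = ℓ v
      · exact ⟨b, hbb, by rw [← h]; exact hab.symm⟩
      · exact ⟨a, haa, h⟩
    have hM0 : oangle (r v) v (ℓ v) = 0 := by
      rw [← he]; exact oangle_self_toReal _ _
    have h1 : oangle c v (ℓ v) ≤ 0 := (hmax c hc (ℓ v) hl).trans_eq hM0
    have h2 : oangle (ℓ v) v c ≤ 0 := (hmax (ℓ v) hl c hc).trans_eq hM0
    obtain ⟨hiff1, hne1, hne01, _⟩ := cross_nbhd hG hv hc hl hcl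
    obtain ⟨hiff2, hne2, hne02, _⟩ := cross_nbhd hG hv hl hc (Ne.symm hcl)
    have hcr1 : cross (c - v) (ℓ v - v) < 0 := by
      rcases hne1.lt_or_gt with h | h
      · exact h
      · exact absurd (hiff1.mpr h) (not_lt.mpr h1)
    have hcr2 : 0 < cross (ℓ v - v) (c - v) := by
      have := cross_swap (c - v) (ℓ v - v)
      linarith
    exact absurd (hiff2.mpr hcr2) (not_lt.mpr h2)
  have hrl_ne : r v ≠ ℓ v := Ne.symm hlr_ne
  have hMpos : 0 < oangle (r v) v (ℓ v) ∧ 0 < cross (r v - v) (ℓ v - v) := by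
    obtain ⟨hiff, hne, _, _⟩ := cross_nbhd hG hv hr hl hrl_ne
    rcases hne.lt_or_gt with h | h
    · obtain ⟨hiff', hne', _, _⟩ := cross_nbhd hG hv hl hr hlr_ne
      have hcr : 0 < cross (ℓ v - v) (r v - v) := by
        have := cross_swap (r v - v) (ℓ v - v)
        linarith
      have hpos := hiff'.mpr hcr
      have hM : 0 < oangle (r v) v (ℓ v) := lt_of_lt_of_le hpos (hmax (ℓ v) hl (r v) hr)
      exact ⟨hM, hiff.mp hM⟩
    · exact ⟨hiff.mpr h, h⟩
  intro w hw
  have hwv : w ≠ v := ne_of_nbhd hG hw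
  constructor
  · intro hwl
    by_cases hwr : w = r v
    · rw [hwr]; exact hMpos.2
    · obtain ⟨hiffwl, hnewl, hne0wl, _⟩ := cross_nbhd hG hv hw hl hwl
      by_contra hneg
      push_neg at hneg
      have hwl_neg : cross (w - v) (ℓ v - v) < 0 := lt_of_le_of_ne hneg hnewl
      have hlw_pos : 0 < cross (ℓ v - v) (w - v) := by
        have := cross_swap (w - v) (ℓ v - v); linarith
      obtain ⟨hiffrw, hnerw, _, _⟩ := cross_nbhd hG hv hr hw (Ne.symm hwr)
      rcases hnerw.lt_or_gt with hrw | hrw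
      · have hwr_pos : 0 < cross (w - v) (r v - v) := by
          have := cross_swap (r v - v) (w - v); linarith
        have hc : 0 < cross (ℓ v - v) (r v - v) :=
          cross_trans f (hf _ hl) (hf _ hw) (hf _ hr) hlw_pos hwr_pos
        have := cross_swap (r v - v) (ℓ v - v)
        linarith [hMpos.2]
      · -- angle addition contradiction
        have hs := hiffrw.mpr hrw
        have hu_neg : oangle w v (ℓ v) < 0 := by
          rcases (lt_or_ge 0 (oangle w v (ℓ v))) with h' | h'
          · exact absurd (hiffwl.mp h') (not_lt.mpr hneg)
          · exact lt_of_le_of_ne h' hne0wl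
        have hadd := EuclideanGeometry.oangle_add hrv hwv hlv
        have hcoe : ((oangle (r v) v w + oangle w v (ℓ v) : ℝ) : Real.Angle) =
            ((oangle (r v) v (ℓ v) : ℝ) : Real.Angle) := by
          rw [Real.Angle.coe_add]
          show ((EuclideanGeometry.oangle (r v) v w).toReal : Real.Angle) +
            ((EuclideanGeometry.oangle w v (ℓ v)).toReal : Real.Angle) =
            ((EuclideanGeometry.oangle (r v) v (ℓ v)).toReal : Real.Angle)
          rw [Real.Angle.coe_toReal, Real.Angle.coe_toReal, Real.Angle.coe_toReal]
          exact hadd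
        have hb1 : oangle (r v) v w ≤ Real.pi := Real.Angle.toReal_le_pi _
        have hb2 : -Real.pi < oangle w v (ℓ v) := Real.Angle.neg_pi_lt_toReal _
        have hb3 : oangle (r v) v (ℓ v) ≤ Real.pi := Real.Angle.toReal_le_pi _
        have heq : oangle (r v) v w + oangle w v (ℓ v) = oangle (r v) v (ℓ v) := by
          apply coe_angle_inj hcoe
          rw [abs_lt]
          constructor <;> nlinarith [Real.pi_pos, hMpos.1]
        have hle : oangle (r v) v w ≤ oangle (r v) v (ℓ v) := hmax (r v) hr w hw
        linarith
  · intro hwr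
    by_cases hwl : w = ℓ v
    · rw [hwl]
      have := cross_swap (r v - v) (ℓ v - v)
      linarith [hMpos.2]
    · obtain ⟨hiffwr, hnewr, hne0wr, _⟩ := cross_nbhd hG hv hw hr hwr
      by_contra hpos
      push_neg at hpos
      have hwr_pos : 0 < cross (w - v) (r v - v) := lt_of_le_of_ne hpos (Ne.symm hnewr)
      obtain ⟨hiffwl2, hnewl2, hne0wl2, _⟩ := cross_nbhd hG hv hw hl hwl
      rcases hnewl2.lt_or_gt with hwl_neg | hwl_pos
      · have hlw : 0 < cross (ℓ v - v) (w - v) := by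
          have := cross_swap (w - v) (ℓ v - v); linarith
        have hc : 0 < cross (r v - v) (w - v) :=
          cross_trans f (hf _ hr) (hf _ hl) (hf _ hw) hMpos.2 hlw
        have := cross_swap (w - v) (r v - v)
        linarith
      · have ht' := hiffwl2.mpr hwl_pos
        have hs' := hiffwr.mpr hwr_pos
        have hadd := EuclideanGeometry.oangle_add hwv hrv hlv
        have hcoe : ((oangle w v (r v) + oangle (r v) v (ℓ v) : ℝ) : Real.Angle) =
            ((oangle w v (ℓ v) : ℝ) : Real.Angle) := by
          rw [Real.Angle.coe_add]
          show ((EuclideanGeometry.oangle w v (r v)).toReal : Real.Angle) +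
            ((EuclideanGeometry.oangle (r v) v (ℓ v)).toReal : Real.Angle) =
            ((EuclideanGeometry.oangle w v (ℓ v)).toReal : Real.Angle)
          rw [Real.Angle.coe_toReal, Real.Angle.coe_toReal, Real.Angle.coe_toReal]
          exact hadd
        have hb1 : oangle w v (r v) ≤ Real.pi := Real.Angle.toReal_le_pi _
        have hb2 : oangle (r v) v (ℓ v) ≤ Real.pi := Real.Angle.toReal_le_pi _
        have hb3 : oangle w v (ℓ v) ≤ Real.pi := Real.Angle.toReal_le_pi _
        have heq : oangle w v (r v) + oangle (r v) v (ℓ v) = oangle w v (ℓ v) := by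
          apply coe_angle_inj hcoe
          rw [abs_lt]
          constructor <;> nlinarith [Real.pi_pos, hMpos.1]
        have hle : oangle w v (ℓ v) ≤ oangle (r v) v (ℓ v) := hmax w hw (ℓ v) hl
        linarith


/-! ### Counting lemmas -/

lemma swap_count (hG : G.IsGeometric) (f : Pt → Pt → ℕ) :
    ∑ v ∈ G.verts, ∑ w ∈ nbhd G v, f v w = ∑ w ∈ G.verts, ∑ v ∈ nbhd G w, f v w := by
  rw [Finset.sum_sigma' G.verts (fun v => nbhd G v) (fun v w => f v w),
    Finset.sum_sigma' G.verts (fun w => nbhd G w) (fun w v => f v w)]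
  refine Finset.sum_nbij' (fun p => ⟨p.2, p.1⟩) (fun p => ⟨p.2, p.1⟩) ?_ ?_ ?_ ?_ ?_
  · rintro ⟨v, w⟩ hp
    rw [Finset.mem_sigma] at hp ⊢
    exact ⟨nbhd_subset_verts hp.2, nbhd_symm hG hp.2⟩
  · rintro ⟨w, v⟩ hp
    rw [Finset.mem_sigma] at hp ⊢
    exact ⟨nbhd_subset_verts hp.2, nbhd_symm hG hp.2⟩
  · rintro ⟨v, w⟩ _; rfl
  · rintro ⟨w, v⟩ _; rfl
  · rintro ⟨v, w⟩ _; rfl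

lemma handshake (hG : G.IsGeometric) : ∑ v ∈ G.verts, deg G v = 2 * G.edges.card := by
  classical
  have h1 : ∑ v ∈ G.verts, deg G v =
      ((G.verts ×ˢ G.verts).filter (fun p => s(p.1, p.2) ∈ G.edges)).card := by
    rw [Finset.card_filter, Finset.sum_product]
    refine Finset.sum_congr rfl fun v _ => ?_
    unfold deg nbhd
    rw [Finset.card_filter]
  rw [h1, Finset.card_eq_sum_card_fiberwise
    (s := (G.verts ×ˢ G.verts).filter (fun p => s(p.1, p.2) ∈ G.edges))
    (f := fun p : Pt × Pt => s(p.1, p.2)) (t := G.edges)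
    (fun p hp => (Finset.mem_filter.mp hp).2)]
  have h2 : ∀ e ∈ G.edges,
      (((G.verts ×ˢ G.verts).filter (fun p => s(p.1, p.2) ∈ G.edges)).filter
        (fun p => s(p.1, p.2) = e)).card = 2 := by
    intro e
    induction e using Sym2.inductionOn with
    | hf a b =>
      intro he
      obtain ⟨hdg, hvs⟩ := hG.1 _ he
      have hab : a ≠ b := fun h => hdg (Sym2.mk_isDiag_iff.mpr h)
      have ha : a ∈ G.verts := hvs a (Sym2.mem_mk_left _ _)
      have hb : b ∈ G.verts := hvs b (Sym2.mem_mk_right _ _)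
      have hset : (((G.verts ×ˢ G.verts).filter (fun p => s(p.1, p.2) ∈ G.edges)).filter
          (fun p => s(p.1, p.2) = s(a, b))) = {(a, b), (b, a)} := by
        ext ⟨x, y⟩
        simp only [Finset.mem_filter, Finset.mem_product, Finset.mem_insert,
          Finset.mem_singleton, Prod.mk.injEq]
        constructor
        · rintro ⟨⟨-, -⟩, heq⟩
          rcases Sym2.eq_iff.mp heq with ⟨rfl, rfl⟩ | ⟨rfl, rfl⟩
          · exact Or.inl ⟨rfl, rfl⟩
          · exact Or.inr ⟨rfl, rfl⟩
        · rintro (⟨rfl, rfl⟩ | ⟨rfl, rfl⟩)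
          · exact ⟨⟨⟨ha, hb⟩, he⟩, rfl⟩
          · exact ⟨⟨⟨hb, ha⟩, by rwa [Sym2.eq_swap] at he⟩, Sym2.eq_swap.symm⟩
      rw [hset, Finset.card_insert_of_notMem (by simp [Prod.ext_iff, hab]),
        Finset.card_singleton]
  rw [Finset.sum_congr rfl h2, Finset.sum_const, smul_eq_mul, mul_comm]

/-- The number of neighbours `a` of `w` whose `L`-image is not `w`. -/
noncomputable def zf (G : GeomGraph) (L : Pt → Pt) (w : Pt) : ℕ :=
  ((nbhd G w).filter (fun a => L a ≠ w)).card

lemma sum_zf (hG : G.IsGeometric) {L : Pt → Pt} (hL : ∀ v ∈ G.verts, L v ∈ nbhd G v) :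
    ∑ w ∈ G.verts, (zf G L w : ℝ) = 2 * (G.edges.card : ℝ) - G.verts.card := by
  classical
  have h2 : ∑ w ∈ G.verts, zf G L w
      = ∑ a ∈ G.verts, ∑ w ∈ nbhd G a, (if L a ≠ w then 1 else 0) := by
    have hsw := swap_count hG (fun a w => if L a ≠ w then 1 else 0)
    rw [hsw]
    refine Finset.sum_congr rfl fun w _ => ?_
    unfold zf
    rw [Finset.card_filter]
  have h3 : ∀ a ∈ G.verts, (∑ w ∈ nbhd G a, if L a ≠ w then 1 else 0) = deg G a - 1 := by
    intro a ha
    rw [← Finset.card_filter]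
    have hfe : (nbhd G a).filter (fun w => L a ≠ w) = (nbhd G a).erase (L a) :=
      Finset.filter_ne _ _
    rw [hfe, Finset.card_erase_of_mem (hL a ha)]
    rfl
  have h4 : ∑ w ∈ G.verts, zf G L w = ∑ a ∈ G.verts, (deg G a - 1) := by
    rw [h2]; exact Finset.sum_congr rfl h3
  have h5 : ∑ w ∈ G.verts, (zf G L w : ℝ) = ∑ a ∈ G.verts, ((deg G a : ℝ) - 1) := by
    rw [← Nat.cast_sum, h4, Nat.cast_sum]
    refine Finset.sum_congr rfl fun a ha => ?_
    have hd1 : 1 ≤ deg G a := by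
      have : (nbhd G a).Nonempty := ⟨L a, hL a ha⟩
      exact Finset.card_pos.mpr this
    rw [Nat.cast_sub hd1, Nat.cast_one]
  rw [h5, Finset.sum_sub_distrib, Finset.sum_const, nsmul_eq_mul, mul_one]
  have h6 : ∑ a ∈ G.verts, (deg G a : ℝ) = 2 * (G.edges.card : ℝ) := by
    rw [← Nat.cast_sum, handshake hG]
    push_cast
    ring
  rw [h6]

end Cor2Aux

/-! ### Auxiliary finite sets for the master counting argument -/

noncomputable def Zset (G : GeomGraph) (L : Pt → Pt) (w : Pt) : Finset Pt :=
  (nbhd G w).filter (fun a => L a ≠ w)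

noncomputable def ZOset (G : GeomGraph) (L : Pt → Pt) (ε : ℝ) (w : Pt) : Finset (Pt × Pt) :=
  (Zset G L w).offDiag.filter (fun p => 0 < ε * Cor2Aux.cross (p.1 - w) (p.2 - w))

noncomputable def Dset (G : GeomGraph) (L : Pt → Pt) (d : Pt → ℕ) (w : Pt) : Finset Pt :=
  (nbhd G w).filter (fun u => L u = w ∧ d u = 1)

noncomputable def Tset (G : GeomGraph) (L : Pt → Pt) (ε : ℝ) (w : Pt) :
    Finset ((_ : Pt) × Pt) :=
  (nbhd G w).sigma (fun a => (nbhd G w).filter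
    (fun b => L a ≠ w ∧ 0 < ε * Cor2Aux.cross (a - w) (b - w)))

noncomputable def Fset (G : GeomGraph) (L : Pt → Pt) (ε : ℝ) (a : Pt) :
    Finset ((_ : Pt) × Pt) :=
  (nbhd G a).sigma (fun w => (nbhd G w).filter
    (fun b => L a ≠ w ∧ 0 < ε * Cor2Aux.cross (a - w) (b - w)))

namespace Cor2Aux

lemma stepA (hG : G.IsGeometric) {L : Pt → Pt} {ε : ℝ}
    (hC2 : ∀ v ∈ G.verts, ∀ w ∈ nbhd G v, w ≠ L v → 0 < ε * cross (w - v) (L v - v))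
    {a : Pt} (ha : a ∈ G.verts) : (Fset G L ε a).card ≤ (DJl G L a).card := by
  classical
  apply Finset.card_le_card_of_injOn (fun q => s(q.1, q.2))
  · rintro ⟨w, b⟩ hq
    simp only [Finset.mem_coe, Fset, Finset.mem_sigma, Finset.mem_filter] at hq
    obtain ⟨hw, hbw, hLaw, hcr⟩ := hq
    simp only [Finset.mem_coe, DJl, Finset.mem_filter]
    refine ⟨edge_of_nbhd hbw, ⟨w, hw, Sym2.mem_mk_left _ _⟩, ?_⟩
    show edgeSeg s(w, b) ∩ edgeSeg s(a, L a) = ∅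
    have hseg1 : edgeSeg s(w, b) = segment ℝ w b := rfl
    have hseg2 : edgeSeg s(a, L a) = segment ℝ a (L a) := rfl
    rw [hseg1, hseg2]
    have haw : a ≠ w := (ne_of_nbhd hG hw).symm
    refine seg_disjoint (fun p => ε * cross (a - w) (p - w)) ?_ ?_ ?_ ?_ hcr haw
    · intro t u x
      simp only [cross, sub_app, PiLp.add_apply, PiLp.smul_apply, smul_eq_mul]
      ring
    · show ε * cross (a - w) (a - w) = 0
      rw [cross_self, mul_zero]
    · show ε * cross (a - w) (L a - w) < 0
      have hcc := hC2 a ha w hw (Ne.symm hLaw)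
      have hfl : cross (a - w) (L a - w) = - cross (w - a) (L a - a) := cross_flip a w (L a)
      rw [hfl]
      nlinarith
    · show ε * cross (a - w) (w - w) = 0
      rw [sub_self, cross_zero_right, mul_zero]
  · rintro ⟨w, b⟩ hq ⟨w', b'⟩ hq' heq
    simp only [Finset.mem_coe, Fset, Finset.mem_sigma, Finset.mem_filter] at hq hq'
    obtain ⟨hw, hbw, hLaw, hcr⟩ := hq
    obtain ⟨hw', hbw', hLaw', hcr'⟩ := hq'
    have heq' : s(w, b) = s(w', b') := heq
    rcases Sym2.eq_iff.mp heq' with ⟨h1, h2⟩ | ⟨h1, h2⟩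
    · subst h1; subst h2; rfl
    · exfalso
      rw [← h2, ← h1] at hcr'
      have hcyc : ε * cross (a - w) (b - w) = -(ε * cross (a - b) (w - b)) := by
        rw [cross_cyc a w b]; ring
      linarith

lemma stepC (hG : G.IsGeometric) {L : Pt → Pt} {ε : ℝ} {d : Pt → ℕ}
    (hd : ∀ v ∈ G.verts, d v = 1 →
      ∃ x, s(L v, x) ∈ G.edges ∧ 0 < ε * cross (x - L v) (v - L v) ∧ L x ≠ L v)
    {w : Pt} (hw : w ∈ G.verts) :
    (ZOset G L ε w).card + (Dset G L d w).card ≤ (Tset G L ε w).card := by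
  classical
  set η : Pt → (_ : Pt) × Pt := fun u =>
    if h : ∃ x, s(w, x) ∈ G.edges ∧ 0 < ε * cross (x - w) (u - w) ∧ L x ≠ w
    then ⟨h.choose, u⟩ else ⟨u, u⟩ with hη
  have hηsnd : ∀ u, (η u).2 = u := by
    intro u; rw [hη]; dsimp only; split <;> rfl
  have hUT : (ZOset G L ε w).image (fun p => (⟨p.1, p.2⟩ : (_ : Pt) × Pt)) ⊆ Tset G L ε w := by
    intro q hq
    rw [Finset.mem_image] at hq
    obtain ⟨p, hp, rfl⟩ := hq
    simp only [ZOset, Finset.mem_filter, Finset.mem_offDiag] at hp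
    obtain ⟨⟨hp1, hp2, hpne⟩, hppos⟩ := hp
    simp only [Zset, Finset.mem_filter] at hp1 hp2
    simp only [Tset, Finset.mem_sigma, Finset.mem_filter]
    exact ⟨hp1.1, hp2.1, hp1.2, hppos⟩
  have hDT : (Dset G L d w).image η ⊆ Tset G L ε w := by
    intro q hq
    rw [Finset.mem_image] at hq
    obtain ⟨u, hu, rfl⟩ := hq
    simp only [Dset, Finset.mem_filter] at hu
    obtain ⟨hunb, hLu, hdu⟩ := hu
    have hex : ∃ x, s(w, x) ∈ G.edges ∧ 0 < ε * cross (x - w) (u - w) ∧ L x ≠ w := by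
      obtain ⟨x, he, hc, hn⟩ := hd u (nbhd_subset_verts hunb) hdu
      rw [hLu] at he hc hn
      exact ⟨x, he, hc, hn⟩
    rw [hη]
    dsimp only
    rw [dif_pos hex]
    obtain ⟨he, hc, hn⟩ := hex.choose_spec
    simp only [Tset, Finset.mem_sigma, Finset.mem_filter]
    exact ⟨mem_nbhd.mpr ⟨(hG.1 _ he).2 _ (Sym2.mem_mk_right _ _), he⟩, hunb, hn, hc⟩
  have hdisj : Disjoint ((ZOset G L ε w).image (fun p => (⟨p.1, p.2⟩ : (_ : Pt) × Pt)))
      ((Dset G L d w).image η) := by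
    rw [Finset.disjoint_left]
    intro q hq1 hq2
    rw [Finset.mem_image] at hq1 hq2
    obtain ⟨p, hp, rfl⟩ := hq1
    obtain ⟨u, hu, hqu⟩ := hq2
    simp only [ZOset, Finset.mem_filter, Finset.mem_offDiag] at hp
    obtain ⟨⟨-, hp2, -⟩, -⟩ := hp
    simp only [Zset, Finset.mem_filter] at hp2
    simp only [Dset, Finset.mem_filter] at hu
    have hup : u = p.2 := by
      have h2 := congrArg (fun q : (_ : Pt) × Pt => q.2) hqu
      dsimp only at h2
      rw [hηsnd] at h2
      exact h2
    rw [hup] at hu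
    exact hp2.2 hu.2.1
  have hinj1 : Set.InjOn (fun p : Pt × Pt => (⟨p.1, p.2⟩ : (_ : Pt) × Pt))
      (ZOset G L ε w) := by
    rintro ⟨x1, y1⟩ - ⟨x2, y2⟩ - h
    simpa using h
  have hinj2 : Set.InjOn η (Dset G L d w) := by
    rintro u1 - u2 - h
    have h2 := congrArg (fun q : (_ : Pt) × Pt => q.2) h
    rwa [hηsnd, hηsnd] at h2
  calc (ZOset G L ε w).card + (Dset G L d w).card
      = ((ZOset G L ε w).image (fun p => (⟨p.1, p.2⟩ : (_ : Pt) × Pt))).card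
        + ((Dset G L d w).image η).card := by
        rw [Finset.card_image_of_injOn hinj1, Finset.card_image_of_injOn hinj2]
    _ = (((ZOset G L ε w).image (fun p => (⟨p.1, p.2⟩ : (_ : Pt) × Pt)))
        ∪ ((Dset G L d w).image η)).card :=
        (Finset.card_union_of_disjoint hdisj).symm
    _ ≤ (Tset G L ε w).card := Finset.card_le_card (Finset.union_subset hUT hDT)

lemma stepD (hG : G.IsGeometric) (L : Pt → Pt) {ε : ℝ} (hε0 : ε ≠ 0)
    {w : Pt} (hw : w ∈ G.verts) :
    2 * (ZOset G L ε w).card = zf G L w * zf G L w - zf G L w := by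
  classical
  have hcards := Finset.card_filter_add_card_filter_not
    (s := (Zset G L w).offDiag) (p := fun p => 0 < ε * cross (p.1 - w) (p.2 - w))
  have hswap : ((Zset G L w).offDiag.filter
      (fun p => ¬ 0 < ε * cross (p.1 - w) (p.2 - w))).card = (ZOset G L ε w).card := by
    apply Finset.card_nbij (fun p => (p.2, p.1))
    · rintro ⟨x, y⟩ hp
      rw [Finset.mem_coe, Finset.mem_filter, Finset.mem_offDiag] at hp
      obtain ⟨⟨hx, hy, hxy⟩, hnp⟩ := hp
      simp only [Finset.mem_coe, ZOset, Finset.mem_filter, Finset.mem_offDiag]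
      refine ⟨⟨hy, hx, hxy.symm⟩, ?_⟩
      simp only [Zset, Finset.mem_filter] at hx hy
      have hne : cross (x - w) (y - w) ≠ 0 :=
        (cross_nbhd hG hw hx.1 hy.1 hxy).2.1
      have hsw : cross (y - w) (x - w) = - cross (x - w) (y - w) := cross_swap _ _
      rw [hsw]
      rcases (mul_ne_zero hε0 hne).lt_or_gt with h | h
      · nlinarith
      · exact absurd h hnp
    · rintro ⟨x1, y1⟩ - ⟨x2, y2⟩ - h
      simpa [Prod.ext_iff, and_comm] using h
    · rintro ⟨x, y⟩ hq
      rw [Finset.mem_coe] at hq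
      simp only [ZOset, Finset.mem_filter, Finset.mem_offDiag] at hq
      obtain ⟨⟨hx, hy, hxy⟩, hppos⟩ := hq
      refine ⟨(y, x), ?_, rfl⟩
      rw [Finset.mem_coe, Finset.mem_filter, Finset.mem_offDiag]
      refine ⟨⟨hy, hx, hxy.symm⟩, ?_⟩
      have hsw : cross (y - w) (x - w) = - cross (x - w) (y - w) := cross_swap _ _
      intro hcon
      rw [hsw] at hcon
      nlinarith
  rw [hswap] at hcards
  have hoff : (Zset G L w).offDiag.card = zf G L w * zf G L w - zf G L w := by
    rw [Finset.offDiag_card]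
    rfl
  have hZO : ((Zset G L w).offDiag.filter
      (fun p => 0 < ε * cross (p.1 - w) (p.2 - w))) = ZOset G L ε w := rfl
  rw [hZO] at hcards
  omega

lemma stepE (hG : G.IsGeometric) {L : Pt → Pt} {d : Pt → ℕ} (hd1 : ∀ v, d v ≤ 1)
    (hL : ∀ v ∈ G.verts, L v ∈ nbhd G v) :
    ∑ w ∈ G.verts, (Dset G L d w).card = ∑ v ∈ G.verts, d v := by
  classical
  have h1 : ∀ w, (Dset G L d w).card
      = ∑ u ∈ nbhd G w, (if L u = w ∧ d u = 1 then 1 else 0) := by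
    intro w
    simp only [Dset]
    rw [Finset.card_filter]
  calc ∑ w ∈ G.verts, (Dset G L d w).card
      = ∑ w ∈ G.verts, ∑ u ∈ nbhd G w, (if L u = w ∧ d u = 1 then 1 else 0) :=
        Finset.sum_congr rfl fun w _ => h1 w
    _ = ∑ u ∈ G.verts, ∑ w ∈ nbhd G u, (if L u = w ∧ d u = 1 then 1 else 0) :=
        (swap_count hG (fun u w => if L u = w ∧ d u = 1 then 1 else 0)).symm
    _ = ∑ u ∈ G.verts, d u := by
        refine Finset.sum_congr rfl fun u hu => ?_
        by_cases hdu : d u = 1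
        · simp only [hdu, and_true]
          rw [Finset.sum_ite_eq (nbhd G u) (L u) (fun _ => 1), if_pos (hL u hu)]
        · have hdu0 : d u = 0 := by have := hd1 u; omega
          simp [hdu0]

lemma master (hG : G.IsGeometric) (L : Pt → Pt) (ε : ℝ) (hε : ε = 1 ∨ ε = -1)
    (hL : ∀ v ∈ G.verts, L v ∈ nbhd G v)
    (hC2 : ∀ v ∈ G.verts, ∀ w ∈ nbhd G v, w ≠ L v → 0 < ε * cross (w - v) (L v - v))
    (d : Pt → ℕ) (hd1 : ∀ v, d v ≤ 1)
    (hd : ∀ v ∈ G.verts, d v = 1 →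
      ∃ x, s(L v, x) ∈ G.edges ∧ 0 < ε * cross (x - L v) (v - L v) ∧ L x ≠ L v) :
    (∑ w ∈ G.verts, ((zf G L w : ℝ) * ((zf G L w : ℝ) - 1)) / 2) + ∑ v ∈ G.verts, (d v : ℝ) ≤
      ∑ a ∈ G.verts, ((DJl G L a).card : ℝ) := by
  classical
  have hε0 : ε ≠ 0 := by rcases hε with h | h <;> rw [h] <;> norm_num
  -- the natural-number chain
  have hFT : ∑ a ∈ G.verts, (Fset G L ε a).card = ∑ w ∈ G.verts, (Tset G L ε w).card := by
    have hF : ∀ a, (Fset G L ε a).card = ∑ w ∈ nbhd G a,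
        ((nbhd G w).filter (fun b => L a ≠ w ∧ 0 < ε * cross (a - w) (b - w))).card := by
      intro a
      simp only [Fset]
      exact Finset.card_sigma _ _
    have hT : ∀ w, (Tset G L ε w).card = ∑ a ∈ nbhd G w,
        ((nbhd G w).filter (fun b => L a ≠ w ∧ 0 < ε * cross (a - w) (b - w))).card := by
      intro w
      simp only [Tset]
      exact Finset.card_sigma _ _
    calc ∑ a ∈ G.verts, (Fset G L ε a).card
        = ∑ a ∈ G.verts, ∑ w ∈ nbhd G a,
            ((nbhd G w).filter (fun b => L a ≠ w ∧ 0 < ε * cross (a - w) (b - w))).card :=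
          Finset.sum_congr rfl fun a _ => hF a
      _ = ∑ w ∈ G.verts, ∑ a ∈ nbhd G w,
            ((nbhd G w).filter (fun b => L a ≠ w ∧ 0 < ε * cross (a - w) (b - w))).card :=
          swap_count hG _
      _ = ∑ w ∈ G.verts, (Tset G L ε w).card :=
          Finset.sum_congr rfl fun w _ => (hT w).symm
  have hnat : ∑ w ∈ G.verts, ((ZOset G L ε w).card + (Dset G L d w).card) ≤
      ∑ a ∈ G.verts, (DJl G L a).card := by
    calc ∑ w ∈ G.verts, ((ZOset G L ε w).card + (Dset G L d w).card)
        ≤ ∑ w ∈ G.verts, (Tset G L ε w).card :=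
          Finset.sum_le_sum fun w hw => stepC hG hd hw
      _ = ∑ a ∈ G.verts, (Fset G L ε a).card := hFT.symm
      _ ≤ ∑ a ∈ G.verts, (DJl G L a).card :=
          Finset.sum_le_sum fun a ha => stepA hG hC2 ha
  -- cast to the reals
  have hZOreal : ∀ w ∈ G.verts,
      ((ZOset G L ε w).card : ℝ) = ((zf G L w : ℝ) * ((zf G L w : ℝ) - 1)) / 2 := by
    intro w hw
    have h2 := stepD hG L hε0 hw
    have hle : zf G L w ≤ zf G L w * zf G L w := by
      rcases Nat.eq_zero_or_pos (zf G L w) with h | h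
      · omega
      · exact Nat.le_mul_of_pos_left _ h
    have := congrArg (fun n : ℕ => (n : ℝ)) h2
    push_cast [Nat.cast_sub hle] at this
    linarith
  have hcast : (∑ w ∈ G.verts, ((zf G L w : ℝ) * ((zf G L w : ℝ) - 1)) / 2)
      + ∑ v ∈ G.verts, (d v : ℝ)
      = ((∑ w ∈ G.verts, ((ZOset G L ε w).card + (Dset G L d w).card) : ℕ) : ℝ) := by
    push_cast
    rw [Finset.sum_add_distrib]
    have e1 : ∑ w ∈ G.verts, ((ZOset G L ε w).card : ℝ)
        = ∑ w ∈ G.verts, ((zf G L w : ℝ) * ((zf G L w : ℝ) - 1)) / 2 :=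
      Finset.sum_congr rfl hZOreal
    have e2 : ∑ w ∈ G.verts, ((Dset G L d w).card : ℝ) = ∑ v ∈ G.verts, (d v : ℝ) := by
      rw [← Nat.cast_sum, stepE hG hd1 hL, Nat.cast_sum]
    rw [e1, e2]
  rw [hcast]
  have := (Nat.cast_le (α := ℝ)).mpr hnat
  calc ((∑ w ∈ G.verts, ((ZOset G L ε w).card + (Dset G L d w).card) : ℕ) : ℝ)
      ≤ ((∑ a ∈ G.verts, (DJl G L a).card : ℕ) : ℝ) := this
    _ = ∑ a ∈ G.verts, ((DJl G L a).card : ℝ) := by push_cast; rfl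

/-! ### The Cauchy–Schwarz step -/

lemma cs_bound (G : GeomGraph) (L : Pt → Pt) :
    (∑ w ∈ G.verts, (zf G L w : ℝ)) ^ 2 /
        (2 * ((G.verts.card : ℝ) - (G.verts.filter (fun v => ∀ w ∈ nbhd G v, L w = v)).card))
      - (∑ w ∈ G.verts, (zf G L w : ℝ)) / 2
      ≤ ∑ w ∈ G.verts, ((zf G L w : ℝ) * ((zf G L w : ℝ) - 1)) / 2 := by
  classical
  set S := G.verts.filter (fun v => ¬ ∀ w ∈ nbhd G v, L w = v) with hS
  have hz0 : ∀ w ∈ G.verts, w ∉ S → zf G L w = 0 := by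
    intro w hw hns
    rw [hS, Finset.mem_filter] at hns
    simp only [not_and, not_not] at hns
    have hall := hns hw
    unfold zf
    rw [Finset.card_eq_zero, Finset.filter_eq_empty_iff]
    intro a hanb
    simp only [not_not]
    exact hall a hanb
  have hSsub : S ⊆ G.verts := Finset.filter_subset _ _
  have hScard : ((S.card : ℝ)) = (G.verts.card : ℝ)
      - (G.verts.filter (fun v => ∀ w ∈ nbhd G v, L w = v)).card := by
    have hsplit := Finset.card_filter_add_card_filter_not
      (s := G.verts) (p := fun v => ∀ w ∈ nbhd G v, L w = v)
    rw [hS]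
    have := congrArg (fun n : ℕ => (n : ℝ)) hsplit
    push_cast at this
    linarith
  have hsub : ∀ g : Pt → ℝ, (∀ w ∈ G.verts, w ∉ S → g w = 0) →
      ∑ w ∈ G.verts, g w = ∑ w ∈ S, g w := by
    intro g hg
    exact (Finset.sum_subset hSsub hg).symm
  have hrw1 : ∑ w ∈ G.verts, (zf G L w : ℝ) = ∑ w ∈ S, (zf G L w : ℝ) :=
    hsub _ (fun w hw hns => by rw [hz0 w hw hns]; norm_num)
  have hrw2 : ∑ w ∈ G.verts, ((zf G L w : ℝ) * ((zf G L w : ℝ) - 1)) / 2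
      = ∑ w ∈ S, ((zf G L w : ℝ) * ((zf G L w : ℝ) - 1)) / 2 :=
    hsub _ (fun w hw hns => by rw [hz0 w hw hns]; norm_num)
  rw [hrw1, hrw2, ← hScard]
  rcases Finset.eq_empty_or_nonempty S with hSe | hSne
  · rw [hSe]
    simp
  · have hcard_pos : 0 < (S.card : ℝ) := by
      exact_mod_cast Finset.card_pos.mpr hSne
    set A := ∑ w ∈ S, (zf G L w : ℝ) with hA
    have hCS : A ^ 2 ≤ (S.card : ℝ) * ∑ w ∈ S, (zf G L w : ℝ) ^ 2 := by
      have h := Finset.sum_mul_sq_le_sq_mul_sq S (fun w => (zf G L w : ℝ)) (fun _ => 1)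
      simp only [mul_one, one_pow, Finset.sum_const, nsmul_eq_mul] at h
      calc A ^ 2 ≤ (∑ w ∈ S, (zf G L w : ℝ) ^ 2) * (S.card : ℝ) := h
        _ = (S.card : ℝ) * ∑ w ∈ S, (zf G L w : ℝ) ^ 2 := by ring
    have hsumsq : ∑ w ∈ S, ((zf G L w : ℝ) * ((zf G L w : ℝ) - 1)) / 2
        = ((∑ w ∈ S, (zf G L w : ℝ) ^ 2) - A) / 2 := by
      rw [hA, ← Finset.sum_sub_distrib, ← Finset.sum_div]
      congr 1
      refine Finset.sum_congr rfl fun w _ => ?_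
      ring
    rw [hsumsq]
    have h2c : 0 < 2 * (S.card : ℝ) := by linarith
    have hdiv : A ^ 2 / (2 * (S.card : ℝ)) ≤ (∑ w ∈ S, (zf G L w : ℝ) ^ 2) / 2 := by
      rw [div_le_div_iff₀ h2c (by norm_num : (0:ℝ) < 2)]
      nlinarith
    linarith

/-! ### The delta interfaces -/

lemma deltal_spec (hG : G.IsGeometric) {ℓ r : Pt → Pt} (hlr : IsLeftRight G ℓ r) :
    ∀ v ∈ G.verts, deltal G ℓ v = 1 →
      ∃ x, s(ℓ v, x) ∈ G.edges ∧ 0 < 1 * cross (x - ℓ v) (v - ℓ v) ∧ ℓ x ≠ ℓ v := by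
  intro v hv h1
  by_cases h : ∃ x, s(ℓ v, x) ∈ G.edges ∧ 0 < oangle x (ℓ v) v ∧ ℓ x ≠ ℓ v
  · obtain ⟨x, he, hoa, hlx⟩ := h
    refine ⟨x, he, ?_, hlx⟩
    rw [one_mul]
    have hlv : ℓ v ∈ nbhd G v := (hlr v hv).1
    have hvl : v ∈ nbhd G (ℓ v) := nbhd_symm hG hlv
    have hx : x ∈ nbhd G (ℓ v) :=
      mem_nbhd.mpr ⟨(hG.1 _ he).2 x (Sym2.mem_mk_right _ _), he⟩
    have hxv : x ≠ v := by
      intro hxv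
      rw [hxv, oangle_self_toReal] at hoa
      exact lt_irrefl 0 hoa
    obtain ⟨hiff, -, -, -⟩ := cross_nbhd hG (nbhd_subset_verts hlv) hx hvl hxv
    exact hiff.mp hoa
  · unfold deltal at h1
    rw [if_neg h] at h1
    exact absurd h1 (by norm_num)

lemma deltar_spec (hG : G.IsGeometric) {ℓ r : Pt → Pt} (hlr : IsLeftRight G ℓ r) :
    ∀ v ∈ G.verts, deltar G r v = 1 →
      ∃ x, s(r v, x) ∈ G.edges ∧ 0 < (-1 : ℝ) * cross (x - r v) (v - r v) ∧ r x ≠ r v := by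
  intro v hv h1
  by_cases h : ∃ x, s(r v, x) ∈ G.edges ∧ oangle x (r v) v < 0 ∧ r x ≠ r v
  · obtain ⟨x, he, hoa, hlx⟩ := h
    refine ⟨x, he, ?_, hlx⟩
    have hrv : r v ∈ nbhd G v := (hlr v hv).2.1
    have hvr : v ∈ nbhd G (r v) := nbhd_symm hG hrv
    have hx : x ∈ nbhd G (r v) :=
      mem_nbhd.mpr ⟨(hG.1 _ he).2 x (Sym2.mem_mk_right _ _), he⟩
    have hxv : x ≠ v := by
      intro hxv
      rw [hxv, oangle_self_toReal] at hoa
      exact lt_irrefl 0 hoa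
    obtain ⟨hiff, hne, hne0, -⟩ := cross_nbhd hG (nbhd_subset_verts hrv) hx hvr hxv
    have hcneg : cross (x - r v) (v - r v) < 0 := by
      rcases hne.lt_or_gt with hc | hc
      · exact hc
      · exact absurd (hiff.mpr hc) (by linarith)
    linarith
  · unfold deltar at h1
    rw [if_neg h] at h1
    exact absurd h1 (by norm_num)

lemma deltal_le_one (G : GeomGraph) (ℓ : Pt → Pt) (v : Pt) : deltal G ℓ v ≤ 1 := by
  unfold deltal; split <;> norm_num

lemma deltar_le_one (G : GeomGraph) (r : Pt → Pt) (v : Pt) : deltar G r v ≤ 1 := by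
  unfold deltar; split <;> norm_num

end Cor2Aux


/-- **Corollary 2.** For a locally convex geometric graph with minimum degree at least 2,
`n = |V(G)|` and `e = |E(G)|`:
`Σ_v (|DJ_ℓ(v)| + |DJ_r(v)|) ≥ (2e−n)²/(2(n−n_ℓ)) + (2e−n)²/(2(n−n_r)) − (2e−n) + Σ_v (δ_ℓ(v)+δ_r(v))`. -/
theorem sum_DJl_add_DJr_lower_bound' (G : GeomGraph) (hG : G.IsGeometric)
    (hconv : G.LocallyConvex) (hdeg : ∀ v ∈ G.verts, 2 ≤ deg G v)
    (ℓ r : Pt → Pt) (hlr : IsLeftRight G ℓ r) :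
    (∑ v ∈ G.verts, (((DJl G ℓ v).card : ℝ) + (DJr G r v).card)) ≥
      (2 * (G.edges.card : ℝ) - G.verts.card) ^ 2 / (2 * ((G.verts.card : ℝ) - nl G ℓ)) +
        (2 * (G.edges.card : ℝ) - G.verts.card) ^ 2 / (2 * ((G.verts.card : ℝ) - nr G r)) -
        (2 * (G.edges.card : ℝ) - G.verts.card) +
        (∑ v ∈ G.verts, ((deltal G ℓ v : ℝ) + (deltar G r v : ℝ))) := by
  classical
  have hLl : ∀ v ∈ G.verts, ℓ v ∈ nbhd G v := fun v hv => (hlr v hv).1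
  have hLr : ∀ v ∈ G.verts, r v ∈ nbhd G v := fun v hv => (hlr v hv).2.1
  have hC2l : ∀ v ∈ G.verts, ∀ w ∈ nbhd G v, w ≠ ℓ v →
      0 < (1 : ℝ) * Cor2Aux.cross (w - v) (ℓ v - v) := by
    intro v hv w hw hne
    rw [one_mul]
    exact ((Cor2Aux.cone hG hconv hdeg hlr hv) w hw).1 hne
  have hC2r : ∀ v ∈ G.verts, ∀ w ∈ nbhd G v, w ≠ r v →
      0 < (-1 : ℝ) * Cor2Aux.cross (w - v) (r v - v) := by
    intro v hv w hw hne
    have := ((Cor2Aux.cone hG hconv hdeg hlr hv) w hw).2 hne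
    linarith
  have masterL := Cor2Aux.master hG ℓ 1 (Or.inl rfl) hLl hC2l (deltal G ℓ)
    (Cor2Aux.deltal_le_one G ℓ) (Cor2Aux.deltal_spec hG hlr)
  have masterR := Cor2Aux.master hG r (-1) (Or.inr rfl) hLr hC2r (deltar G r)
    (Cor2Aux.deltar_le_one G r) (Cor2Aux.deltar_spec hG hlr)
  have hsumL := Cor2Aux.sum_zf hG hLl
  have hsumR := Cor2Aux.sum_zf hG hLr
  have hcsL := Cor2Aux.cs_bound G ℓ
  have hcsR := Cor2Aux.cs_bound G r
  rw [hsumL] at hcsL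
  rw [hsumR] at hcsR
  have hDJr : ∀ v, DJr G r v = DJl G r v := fun _ => rfl
  have hnl : ((nl G ℓ : ℕ) : ℝ)
      = ((G.verts.filter (fun v => ∀ w ∈ nbhd G v, ℓ w = v)).card : ℝ) := rfl
  have hnr : ((nr G r : ℕ) : ℝ)
      = ((G.verts.filter (fun v => ∀ w ∈ nbhd G v, r w = v)).card : ℝ) := rfl
  have hsplit : ∑ v ∈ G.verts, (((DJl G ℓ v).card : ℝ) + (DJr G r v).card)
      = ∑ v ∈ G.verts, ((DJl G ℓ v).card : ℝ) + ∑ v ∈ G.verts, ((DJl G r v).card : ℝ) := by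
    rw [← Finset.sum_add_distrib]
    refine Finset.sum_congr rfl fun v _ => ?_
    rw [hDJr v]
  have hdsplit : ∑ v ∈ G.verts, ((deltal G ℓ v : ℝ) + (deltar G r v : ℝ))
      = ∑ v ∈ G.verts, (deltal G ℓ v : ℝ) + ∑ v ∈ G.verts, (deltar G r v : ℝ) :=
    Finset.sum_add_distrib
  rw [ge_iff_le, hsplit, hdsplit, hnl, hnr]
  linarith [masterL, masterR, hcsL, hcsR]

end
end
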